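/- arXiv:1810.05590 — 8 statements merged into one kernel-verified Lean document; each statement's English description precedes it below -/
import Mathlib

section
/- Let G be a mixed graph on a finite vertex type V. If G has an induced 2-dipath or a pair of obstructing arcs, then there exists a natural number k such that f_o(G,k) ≠ f(U(G),k); in fact f_o(G,k) < f(U(G),k) for some k. -/
/-- Adjacency in a mixed graph with arc relation `A` and edge relation `E`. -/
def MAdj {V : Type*} (A E : V → V → Prop) (u v : V) : Prop :=
  A u v ∨ A v u ∨ E u v

/-- `u` and `w` are the ends of a 2-dipath. -/
def DipathEnds {V : Type*} (A : V → V → Prop) (u w : V) : Prop :=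
  ∃ z, (A u z ∧ A z w) ∨ (A w z ∧ A z u)

/-- An oriented colouring of a mixed graph. -/
def MixedColoring {V : Type*} (A E : V → V → Prop) {k : ℕ} (c : V → Fin k) : Prop :=
  (∀ u v, MAdj A E u v → c u ≠ c v) ∧
  (∀ u v x y, A u v → A x y → c u = c y → c v ≠ c x)

/-- `f_o(G,k)`: the number of oriented `k`-colourings of the mixed graph `G = (V, A, E)`. -/
noncomputable def foM {V : Type*} (A E : V → V → Prop) (k : ℕ) : ℕ :=
  Nat.card {c : V → Fin k // MixedColoring A E c}

/-- The number of proper `k`-colourings of the simple graph with adjacency relation `adj`. -/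
noncomputable def properCount {V : Type*} (adj : V → V → Prop) (k : ℕ) : ℕ :=
  Nat.card {c : V → Fin k // ∀ u v, adj u v → c u ≠ c v}

/-- The arcs `a.1 → a.2` and `b.1 → b.2` form a pair of obstructing arcs. -/
def ObstructingPair {V : Type*} (A E : V → V → Prop) (a b : V × V) : Prop :=
  A a.1 a.2 ∧ A b.1 b.2 ∧
  a.1 ≠ a.2 ∧ a.1 ≠ b.1 ∧ a.1 ≠ b.2 ∧ a.2 ≠ b.1 ∧ a.2 ≠ b.2 ∧ b.1 ≠ b.2 ∧
  ¬ MAdj A E a.1 b.2 ∧ ¬ DipathEnds A a.1 b.2 ∧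
  ¬ MAdj A E a.2 b.1 ∧ ¬ DipathEnds A a.2 b.1

/-!
A proper colouring of `U(G)` is oriented unless it gives the tails and heads of two arcs `u → v`,
`x → y` colours with `c u = c y` and `c v = c x`. Both an induced 2-dipath `u → z → w` and a pair of
obstructing arcs `u → v`, `x → y` let us build such a colouring with `Nat.card V` colours: colour
each vertex by its own name, except that `y` takes the colour of `u` and `x` that of `v`. This only
merges non-adjacent vertices, so it stays proper, and it is not oriented.
-/

open Function

section
variable {V : Type*} {A E : V → V → Prop}

lemma MAdj.irrefl (hAirr : ∀ u, ¬ A u u) (hEirr : ∀ u, ¬ E u u) (x : V) : ¬ MAdj A E x x := by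
  rintro (h | h | h) <;> solve_by_elim

lemma MAdj.symm (hEsymm : ∀ u v, E u v → E v u) {x y : V} : MAdj A E x y → MAdj A E y x := by
  rintro (h | h | h)
  exacts [Or.inr (Or.inl h), Or.inl h, Or.inr (Or.inr (hEsymm _ _ h))]

lemma foM_lt_properCount_of_not_mixedColoring [Finite V] {k : ℕ} (c : V → Fin k)
    (hc : ∀ u v, MAdj A E u v → c u ≠ c v) (hnc : ¬ MixedColoring A E c) :
    foM A E k < properCount (MAdj A E) k := by
  change Nat.card {c | MixedColoring A E c} <
    Nat.card {c : V → Fin k | ∀ u v, MAdj A E u v → c u ≠ c v}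
  rw [Nat.card_coe_set_eq, Nat.card_coe_set_eq]
  exact Set.ncard_lt_ncard ⟨fun d hd => hd.1, fun hsub => hnc (hsub hc)⟩ (Set.toFinite _)

lemma foM_lt_properCount_of_identify [Finite V] (σ : V → V)
    (hσ : ∀ s t, MAdj A E s t → σ s ≠ σ t) {u v x y : V} (huv : A u v) (hxy : A x y)
    (hu : σ u = σ y) (hv : σ v = σ x) :
    foM A E (Nat.card V) < properCount (MAdj A E) (Nat.card V) := by
  let e := Finite.equivFin V
  refine foM_lt_properCount_of_not_mixedColoring (fun t => e (σ t))
    (fun s t hst h => hσ s t hst (e.injective h)) ?_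
  rintro ⟨-, horient⟩
  exact horient u v x y huv hxy (congrArg e hu) (congrArg e hv)

lemma foM_lt_properCount_of_dipath [Finite V] (hAirr : ∀ u, ¬ A u u) (hEirr : ∀ u, ¬ E u u)
    (hEsymm : ∀ u v, E u v → E v u) {u z w : V} (huz : A u z) (hzw : A z w)
    (hna : ¬ MAdj A E u w) :
    foM A E (Nat.card V) < properCount (MAdj A E) (Nat.card V) := by
  classical
  let σ : V → V := update id w u
  have hmerge : ∀ s t, σ s = σ t → s = t ∨ (s = w ∧ t = u) ∨ (s = u ∧ t = w) := by
    intro s t h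
    simp only [σ, update_apply, id] at h
    split_ifs at h <;> simp_all
  refine foM_lt_properCount_of_identify σ ?_ huz hzw ?_ rfl
  · intro s t hst h
    rcases hmerge s t h with rfl | ⟨rfl, rfl⟩ | ⟨rfl, rfl⟩
    exacts [MAdj.irrefl hAirr hEirr _ hst, hna (hst.symm hEsymm), hna hst]
  · by_cases huw : u = w
    · rw [huw]
    · simp [σ, huw]

lemma foM_lt_properCount_of_nonadjacent_arcs [Finite V] (hAirr : ∀ u, ¬ A u u)
    (hEirr : ∀ u, ¬ E u u) (hEsymm : ∀ u v, E u v → E v u) {u v x y : V}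
    (huv : A u v) (hxy : A x y) (hux : u ≠ x) (huy : u ≠ y) (hvx : v ≠ x) (hvy : v ≠ y)
    (hnuy : ¬ MAdj A E u y) (hnvx : ¬ MAdj A E v x) :
    foM A E (Nat.card V) < properCount (MAdj A E) (Nat.card V) := by
  classical
  have hxy' : x ≠ y := fun h => hAirr x (h ▸ hxy)
  let σ : V → V := update (update id x v) y u
  have hmerge : ∀ s t, σ s = σ t → s = t ∨ (s = u ∧ t = y) ∨ (s = y ∧ t = u) ∨
      (s = v ∧ t = x) ∨ (s = x ∧ t = v) := by
    intro s t h
    simp only [σ, update_apply, id] at h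
    split_ifs at h <;> simp_all
  refine foM_lt_properCount_of_identify σ ?_ huv hxy ?_ ?_
  · intro s t hst h
    rcases hmerge s t h with rfl | ⟨rfl, rfl⟩ | ⟨rfl, rfl⟩ | ⟨rfl, rfl⟩ | ⟨rfl, rfl⟩
    exacts [MAdj.irrefl hAirr hEirr _ hst, hnuy hst, hnuy (hst.symm hEsymm), hnvx hst,
      hnvx (hst.symm hEsymm)]
  · simp [σ, huy, hux]
  · simp [σ, hvy, hvx, hxy']

end

theorem stmt_3_general {V : Type*} [Fintype V] (A E : V → V → Prop)
    (hAirr : ∀ u, ¬ A u u) (hEirr : ∀ u, ¬ E u u) (hEsymm : ∀ u v, E u v → E v u)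
    (hbad : (∃ u w, DipathEnds A u w ∧ ¬ MAdj A E u w) ∨
      (∃ a b : V × V, ObstructingPair A E a b)) :
    (∃ k : ℕ, foM A E k ≠ properCount (MAdj A E) k) ∧
    (∃ k : ℕ, foM A E k < properCount (MAdj A E) k) := by
  suffices h : foM A E (Nat.card V) < properCount (MAdj A E) (Nat.card V) from
    ⟨⟨_, h.ne⟩, ⟨_, h⟩⟩
  rcases hbad with ⟨u, w, ⟨z, ⟨huz, hzw⟩ | ⟨hwz, hzu⟩⟩, hna⟩ |
    ⟨⟨u, v⟩, ⟨x, y⟩, huv, hxy, -, hux, huy, hvx, hvy, -, hnuy, -, hnvx, -⟩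
  · exact foM_lt_properCount_of_dipath hAirr hEirr hEsymm huz hzw hna
  · exact foM_lt_properCount_of_dipath hAirr hEirr hEsymm hwz hzu fun h => hna (h.symm hEsymm)
  · exact foM_lt_properCount_of_nonadjacent_arcs hAirr hEirr hEsymm huv hxy hux huy hvx hvy
      hnuy hnvx

theorem stmt_3 {V : Type*} [Fintype V] (A E : V → V → Prop)
    (hAirr : ∀ u, ¬ A u u) (hAanti : ∀ u v, A u v → ¬ A v u)
    (hEirr : ∀ u, ¬ E u u) (hEsymm : ∀ u v, E u v → E v u)
    (hAE : ∀ u v, (A u v ∨ A v u) → ¬ E u v)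
    (hbad : (∃ u w, DipathEnds A u w ∧ ¬ MAdj A E u w) ∨
      (∃ a b : V × V, ObstructingPair A E a b)) :
    (∃ k : ℕ, foM A E k ≠ properCount (MAdj A E) k) ∧
    (∃ k : ℕ, foM A E k < properCount (MAdj A E) k) :=
  stmt_3_general A E hAirr hEirr hEsymm hbad
end

section
/- Let G be an oriented graph on a finite vertex type V, and let G* be the mixed graph obtained from G by keeping all arcs of G and adding an edge between u and w for every unordered pair {u,w} of non-adjacent vertices that are the ends of a 2-dipath. Then f_o(G,k) = f_o(G*,k) for every natural number k. -/
/-- Adjacency in an oriented graph with arc relation `A`. -/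
def OAdj {V : Type*} (A : V → V → Prop) (u v : V) : Prop :=
  A u v ∨ A v u

/-- An oriented colouring of an oriented graph. -/
def OColoring {V : Type*} (A : V → V → Prop) {k : ℕ} (c : V → Fin k) : Prop :=
  (∀ u v, A u v → c u ≠ c v) ∧
  (∀ u v x y, A u v → A x y → c u = c y → c v ≠ c x)

/-- The number of oriented `k`-colourings of the oriented graph `G = (V, A)`. -/
noncomputable def foO {V : Type*} (A : V → V → Prop) (k : ℕ) : ℕ :=
  Nat.card {c : V → Fin k // OColoring A c}

/- An oriented colouring already separates the ends of every 2-dipath u → z → w: the arcs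
u → z and z → w with c u = c w would force c z ≠ c z. So the edges added along 2-dipaths do not
constrain oriented colourings. -/

section

variable {V : Type*} {A : V → V → Prop} {k : ℕ} {c : V → Fin k}

theorem OColoring.ne_of_dipathEnds (hc : OColoring A c) {u w : V} (h : DipathEnds A u w) :
    c u ≠ c w := by
  obtain ⟨z, ⟨huz, hzw⟩ | ⟨hwz, hzu⟩⟩ := h
  · exact fun huw => hc.2 u z z w huz hzw huw rfl
  · exact fun huw => hc.2 w z z u hwz hzu huw.symm rfl

theorem OColoring.ne_of_oAdj (hc : OColoring A c) {u v : V} (h : OAdj A u v) : c u ≠ c v :=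
  h.elim (hc.1 u v) fun hvu => (hc.1 v u hvu).symm

theorem mixedColoring_iff_oColoring {E : V → V → Prop} (hE : ∀ u w, E u w → DipathEnds A u w) :
    MixedColoring A E c ↔ OColoring A c := by
  refine ⟨fun hc => ⟨fun u v h => hc.1 u v (Or.inl h), hc.2⟩, fun hc => ⟨?_, hc.2⟩⟩
  rintro u v (h | h | h)
  · exact hc.ne_of_oAdj (Or.inl h)
  · exact hc.ne_of_oAdj (Or.inr h)
  · exact hc.ne_of_dipathEnds (hE u v h)

theorem foM_eq_foO {E : V → V → Prop} (hE : ∀ u w, E u w → DipathEnds A u w) (k : ℕ) :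
    foM A E k = foO A k :=
  Nat.card_congr (Equiv.subtypeEquivRight fun _ => mixedColoring_iff_oColoring hE)

end

theorem stmt_4_general {V : Type*} (A : V → V → Prop) :
    ∀ k : ℕ, foO A k = foM A (fun u w => ¬ OAdj A u w ∧ DipathEnds A u w) k :=
  fun k => (foM_eq_foO (fun _ _ h => h.2) k).symm

theorem stmt_4 {V : Type*} [Fintype V] (A : V → V → Prop)
    (hAirr : ∀ u, ¬ A u u) (hAanti : ∀ u v, A u v → ¬ A v u) :
    ∀ k : ℕ, foO A k = foM A (fun u w => ¬ OAdj A u w ∧ DipathEnds A u w) k :=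
  stmt_4_general A
end

section
/- An oriented graph G on a finite vertex type V is chromatically invariant if and only if G has no induced 2-dipath and the underlying simple graph U(G) is 2K2-free. -/
/-!
A proper colouring `c` of `U(G)` fails to be oriented exactly when there are arcs `a → b` and
`p → q` with `c a = c q` and `c b = c p`. Such a pair of arcs, with `a, q` and `b, p`
non-adjacent, can always be realised by a proper colouring: colour all vertices distinctly, then
give `q` the colour of `a` and `p` that of `b`. So `G` is chromatically invariant iff no such pair
of arcs exists. If `a` or `b` is adjacent to one of `p`, `q`, some arc between them completes an
induced 2-dipath; otherwise `a b` and `p q` form an induced `2K₂`.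
-/

theorem Nat.card_subtype_eq_card_subtype_iff {α : Type*} [Finite α] {p q : α → Prop}
    (hpq : ∀ a, p a → q a) :
    Nat.card {a // p a} = Nat.card {a // q a} ↔ ∀ a, q a → p a := by
  constructor
  · intro hcard a ha
    have hset : {a | p a} = {a | q a} :=
      Set.eq_of_subset_of_ncard_le hpq <| by
        rw [← Nat.card_coe_set_eq, ← Nat.card_coe_set_eq]
        exact hcard.ge
    exact (Set.ext_iff.mp hset a).mpr ha
  · intro hqp
    rw [funext fun a => propext ⟨hpq a, hqp a⟩]

theorem Function.update_apply_self_eq {α β : Type*} [DecidableEq α] (f : α → β) (a b : α) :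
    Function.update f a (f b) b = f b := by
  rcases eq_or_ne b a with rfl | hba
  · exact Function.update_self b (f b) f
  · exact Function.update_of_ne hba (f b) f

section ProperColoring

variable {V α : Type*}

def IsProperColoring (r : V → V → Prop) (c : V → α) : Prop :=
  ∀ u v, r u v → c u ≠ c v

theorem Function.Injective.isProperColoring {c : V → α} (hc : c.Injective)
    {r : V → V → Prop} (hr : ∀ u, ¬r u u) : IsProperColoring r c := by
  rintro u v huv hcuv
  exact hr u (hc hcuv ▸ huv)

theorem IsProperColoring.update [DecidableEq V] {r : V → V → Prop} (hr : ∀ u v, r u v → r v u)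
    {c : V → α} (hc : IsProperColoring r c) {w : V} {a : α} (ha : ∀ t, r w t → c t ≠ a) :
    IsProperColoring r (Function.update c w a) := by
  intro u v huv
  by_cases hu : u = w <;> by_cases hv : v = w
  · exact absurd (by rw [hu, hv]) (hc u v huv)
  · subst hu
    simpa [hv] using (ha v huv).symm
  · subst hv
    simpa [hu] using ha u (hr u v huv)
  · simpa [hu, hv] using hc u v huv

end ProperColoring

section OrientedGraph

variable {V : Type*} {A : V → V → Prop}

theorem OAdj.symm {u v : V} (h : OAdj A u v) : OAdj A v u :=
  Or.symm h

theorem OColoring.isProperColoring {k : ℕ} {c : V → Fin k} (hc : OColoring A c) :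
    IsProperColoring (OAdj A) c := by
  rintro u v (huv | hvu)
  · exact hc.1 u v huv
  · exact (hc.1 v u hvu).symm

theorem foO_eq_properCount_iff [Finite V] (k : ℕ) :
    foO A k = properCount (OAdj A) k ↔
      ∀ c : V → Fin k, IsProperColoring (OAdj A) c → OColoring A c :=
  Nat.card_subtype_eq_card_subtype_iff fun _ => OColoring.isProperColoring

variable (A) in
/-- Arcs `a → b` and `p → q` that a proper colouring of `U(G)` may, but an oriented colouring may
not, colour with `c a = c q` and `c b = c p`. -/
def IsClashingArcPair (a b p q : V) : Prop :=
  A a b ∧ A p q ∧ ¬OAdj A a q ∧ ¬OAdj A b p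

theorem oColoring_of_isProperColoring (hclash : ∀ a b p q, ¬IsClashingArcPair A a b p q)
    {k : ℕ} {c : V → Fin k} (hc : IsProperColoring (OAdj A) c) : OColoring A c :=
  ⟨fun u v huv => hc u v (Or.inl huv), fun u v x y huv hxy hcuy hcvx =>
    hclash u v x y ⟨huv, hxy, fun h => hc u y h hcuy, fun h => hc v x h hcvx⟩⟩

theorem IsClashingArcPair.exists_isProperColoring_not_oColoring [Fintype V] [DecidableEq V]
    (hirr : ∀ u, ¬A u u) {a b p q : V} (h : IsClashingArcPair A a b p q) :
    ∃ c : V → Fin (Fintype.card V), IsProperColoring (OAdj A) c ∧ ¬OColoring A c := by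
  obtain ⟨hab, hpq, hnaq, hnbp⟩ := h
  have hOirr : ∀ u, ¬OAdj A u u := fun u h => h.elim (hirr u) (hirr u)
  have hab' : a ≠ b := by rintro rfl; exact hirr a hab
  have hpq' : p ≠ q := by rintro rfl; exact hirr p hpq
  have hap : a ≠ p := by rintro rfl; exact hnaq (Or.inl hpq)
  have hbq : b ≠ q := by rintro rfl; exact hnaq (Or.inl hab)
  set e := Fintype.equivFin V
  set c₁ := Function.update e q (e a)
  set c₂ := Function.update c₁ p (c₁ b)
  have hc₁b : c₁ b = e b := Function.update_of_ne hbq _ _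
  have hc₁ : IsProperColoring (OAdj A) c₁ :=
    (e.injective.isProperColoring hOirr).update (fun _ _ => OAdj.symm)
      fun t ht hta => hnaq (e.injective hta ▸ ht.symm)
  have hc₂ : IsProperColoring (OAdj A) c₂ := by
    refine hc₁.update (fun _ _ => OAdj.symm) fun t ht htb => ?_
    rcases eq_or_ne t q with rfl | htq
    · exact hab' (e.injective (by simpa [c₁, hc₁b] using htb))
    · have : t = b := e.injective (by simpa [c₁, htq, hc₁b] using htb)
      exact hnbp (this ▸ ht.symm)
  refine ⟨c₂, hc₂, fun ho => ho.2 a b p q hab hpq ?_ ?_⟩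
  · simp only [c₂, Function.update_of_ne hap, Function.update_of_ne hpq'.symm]
    exact (Function.update_apply_self_eq e q a).trans (Function.update_self q (e a) e).symm
  · simp only [c₂, Function.update_self, Function.update_apply_self_eq]

variable (A) in
def IsInduced2Dipath (u z w : V) : Prop :=
  A u z ∧ A z w ∧ ¬OAdj A u w

variable (A) in
def IsInduced2K2 (u v x y : V) : Prop :=
  u ≠ v ∧ u ≠ x ∧ u ≠ y ∧ v ≠ x ∧ v ≠ y ∧ x ≠ y ∧
    OAdj A u v ∧ OAdj A x y ∧ ¬OAdj A u x ∧ ¬OAdj A u y ∧ ¬OAdj A v x ∧ ¬OAdj A v y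

theorem IsInduced2Dipath.isClashingArcPair (hirr : ∀ u, ¬A u u) {u z w : V}
    (h : IsInduced2Dipath A u z w) : IsClashingArcPair A u z z w :=
  ⟨h.1, h.2.1, h.2.2, fun hz => hz.elim (hirr z) (hirr z)⟩

theorem IsInduced2K2.exists_isClashingArcPair {u v x y : V} (h : IsInduced2K2 A u v x y) :
    ∃ a b p q, IsClashingArcPair A a b p q := by
  obtain ⟨-, -, -, -, -, -, huv, hxy, hnux, hnuy, hnvx, hnvy⟩ := h
  rcases huv with huv | hvu <;> rcases hxy with hxy | hyx
  · exact ⟨u, v, x, y, huv, hxy, hnuy, hnvx⟩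
  · exact ⟨u, v, y, x, huv, hyx, hnux, hnvy⟩
  · exact ⟨v, u, x, y, hvu, hxy, hnvy, hnux⟩
  · exact ⟨v, u, y, x, hvu, hyx, hnvx, hnuy⟩

theorem IsClashingArcPair.isInduced2Dipath_or_isInduced2K2 (hirr : ∀ u, ¬A u u)
    {a b p q : V} (h : IsClashingArcPair A a b p q) :
    (∃ u z w, IsInduced2Dipath A u z w) ∨ IsInduced2K2 A a b p q := by
  obtain ⟨hab, hpq, hnaq, hnbp⟩ := h
  by_cases hap : OAdj A a p
  · left
    rcases hap with hap | hpa
    · exact ⟨a, p, q, hap, hpq, hnaq⟩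
    · exact ⟨p, a, b, hpa, hab, fun h => hnbp h.symm⟩
  by_cases hbq : OAdj A b q
  · left
    rcases hbq with hbq | hqb
    · exact ⟨a, b, q, hab, hbq, hnaq⟩
    · exact ⟨p, q, b, hpq, hqb, fun h => hnbp h.symm⟩
  right
  refine ⟨?_, ?_, ?_, ?_, ?_, ?_, Or.inl hab, Or.inl hpq, hap, hnaq, hnbp, hbq⟩ <;> rintro rfl
  exacts [hirr a hab, hnaq (Or.inl hpq), hap (Or.inr hpq), hbq (Or.inl hpq),
    hnaq (Or.inl hab), hirr p hpq]

variable (A) in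
def ChromaticallyInvariant : Prop :=
  ∀ k, foO A k = properCount (OAdj A) k

theorem chromaticallyInvariant_iff_forall_not_isClashingArcPair [Fintype V]
    (hirr : ∀ u, ¬A u u) :
    ChromaticallyInvariant A ↔ ∀ a b p q, ¬IsClashingArcPair A a b p q := by
  classical
  simp only [ChromaticallyInvariant, foO_eq_properCount_iff]
  refine ⟨fun h a b p q hclash => ?_, fun h k c hc => oColoring_of_isProperColoring h hc⟩
  obtain ⟨c, hc, hnc⟩ := hclash.exists_isProperColoring_not_oColoring hirr
  exact hnc (h _ c hc)

theorem forall_not_isClashingArcPair_iff (hirr : ∀ u, ¬A u u) :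
    (∀ a b p q, ¬IsClashingArcPair A a b p q) ↔
      (¬∃ u z w, IsInduced2Dipath A u z w) ∧ ¬∃ u v x y, IsInduced2K2 A u v x y := by
  constructor
  · intro hclash
    refine ⟨fun ⟨u, z, w, hd⟩ => hclash _ _ _ _ (hd.isClashingArcPair hirr), ?_⟩
    rintro ⟨u, v, x, y, h2K2⟩
    obtain ⟨a, b, p, q, h⟩ := h2K2.exists_isClashingArcPair
    exact hclash a b p q h
  · rintro ⟨hdipath, h2K2⟩ a b p q hclash
    rcases hclash.isInduced2Dipath_or_isInduced2K2 hirr with hd | h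
    · exact hdipath hd
    · exact h2K2 ⟨a, b, p, q, h⟩

end OrientedGraph

theorem stmt_6_general {V : Type*} [Fintype V] (A : V → V → Prop)
    (hAirr : ∀ u, ¬ A u u) :
    (∀ k : ℕ, foO A k = properCount (OAdj A) k) ↔
      ((¬ ∃ u z w, A u z ∧ A z w ∧ ¬ OAdj A u w) ∧
        ¬ ∃ u v x y : V,
          u ≠ v ∧ u ≠ x ∧ u ≠ y ∧ v ≠ x ∧ v ≠ y ∧ x ≠ y ∧
          OAdj A u v ∧ OAdj A x y ∧
          ¬ OAdj A u x ∧ ¬ OAdj A u y ∧ ¬ OAdj A v x ∧ ¬ OAdj A v y) :=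
  (chromaticallyInvariant_iff_forall_not_isClashingArcPair hAirr).trans
    (forall_not_isClashingArcPair_iff hAirr)

theorem stmt_6 {V : Type*} [Fintype V] (A : V → V → Prop)
    (hAirr : ∀ u, ¬ A u u) (hAanti : ∀ u v, A u v → ¬ A v u) :
    (∀ k : ℕ, foO A k = properCount (OAdj A) k) ↔
      ((¬ ∃ u z w, A u z ∧ A z w ∧ ¬ OAdj A u w) ∧
        ¬ ∃ u v x y : V,
          u ≠ v ∧ u ≠ x ∧ u ≠ y ∧ v ≠ x ∧ v ≠ y ∧ x ≠ y ∧
          OAdj A u v ∧ OAdj A x y ∧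
          ¬ OAdj A u x ∧ ¬ OAdj A u y ∧ ¬ OAdj A v x ∧ ¬ OAdj A v y) :=
  stmt_6_general A hAirr
end

section
/- A finite simple graph Γ admits a quasi-transitive orientation if and only if Γ is a comparability graph. -/
/-!
A quasi-transitive orientation `A` is constant on Gallai's implication classes, so the class `C`
of an arc `a → b` is asymmetric and hence, by Golumbic's triangle lemma, transitive. Deleting the
edges of `C` leaves a graph that again has a quasi-transitive orientation: restrict `A`, but reverse
the implication classes of the edges `x b` with `a → x → b` or `b → x → a`, so that every remaining
common neighbour of `a` and `b` sees them on the same side. By induction the smaller graph has a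
transitive orientation, and adding `C` to it gives a transitive orientation of the original one.
-/

open Relation

namespace SimpleGraph

variable {V : Type*} {G : SimpleGraph V}

section Forcing

variable (G) in
/-- Gallai's relation `Γ` on ordered edges; its equivalence classes are the implication classes. -/
def Forces (e f : V × V) : Prop :=
  G.Adj e.1 e.2 ∧ G.Adj f.1 f.2 ∧
    (e.1 = f.1 ∧ ¬ G.Adj e.2 f.2 ∨ e.2 = f.2 ∧ ¬ G.Adj e.1 f.1)

variable (G) in
def SameImplClass : V × V → V × V → Prop := ReflTransGen G.Forces

variable {e f g : V × V}

theorem Forces.symm (h : G.Forces e f) : G.Forces f e := by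
  obtain ⟨he, hf, ⟨h₁, h₂⟩ | ⟨h₁, h₂⟩⟩ := h
  · exact ⟨hf, he, .inl ⟨h₁.symm, fun h => h₂ h.symm⟩⟩
  · exact ⟨hf, he, .inr ⟨h₁.symm, fun h => h₂ h.symm⟩⟩

theorem Forces.swap (h : G.Forces e f) : G.Forces e.swap f.swap := by
  obtain ⟨he, hf, h | h⟩ := h
  exacts [⟨he.symm, hf.symm, .inr h⟩, ⟨he.symm, hf.symm, .inl h⟩]

theorem Forces.sameImplClass (h : G.Forces e f) : G.SameImplClass e f := .single h

theorem SameImplClass.refl (e : V × V) : G.SameImplClass e e := ReflTransGen.refl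

theorem SameImplClass.trans (h : G.SameImplClass e f) (h' : G.SameImplClass f g) :
    G.SameImplClass e g :=
  ReflTransGen.trans h h'

theorem SameImplClass.tail (h : G.SameImplClass e f) (h' : G.Forces f g) :
    G.SameImplClass e g :=
  ReflTransGen.tail h h'

theorem SameImplClass.symm (h : G.SameImplClass e f) : G.SameImplClass f e := by
  induction h with
  | refl => exact .refl _
  | tail _ hstep ih => exact hstep.symm.sameImplClass.trans ih

theorem SameImplClass.swap (h : G.SameImplClass e f) : G.SameImplClass e.swap f.swap :=
  ReflTransGen.lift Prod.swap (fun _ _ => Forces.swap) _ _ h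

theorem SameImplClass.adj (h : G.SameImplClass e f) (he : G.Adj e.1 e.2) : G.Adj f.1 f.2 := by
  induction h with
  | refl => exact he
  | tail _ hstep _ => exact hstep.2.1

/-- Golumbic's triangle lemma. -/
theorem SameImplClass.triangle {a b c : V} (hab : G.Adj a b) (hac : G.Adj a c)
    (hc : ¬ G.SameImplClass (b, c) (a, c)) (hb : ¬ G.SameImplClass (b, c) (b, a))
    (he : G.SameImplClass (b, c) e) :
    G.Adj a e.1 ∧ G.Adj a e.2 ∧
      G.SameImplClass (a, b) (a, e.1) ∧ G.SameImplClass (a, c) (a, e.2) := by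
  induction he with
  | refl => exact ⟨hab, hac, .refl _, .refl _⟩
  | @tail e f he hef ih =>
    obtain ⟨hae₁, hae₂, hbe₁, hce₂⟩ := ih
    obtain ⟨-, hf, ⟨h₁, hn⟩ | ⟨h₂, hn⟩⟩ := id hef
    · have haf₁ : G.Adj a f.1 := h₁ ▸ hae₁
      have haf₂ : G.Adj a f.2 := by
        by_contra h
        have hfa : G.Forces f (f.1, a) := ⟨hf, haf₁.symm, .inl ⟨rfl, fun h' => h h'.symm⟩⟩
        exact hb (((he.tail hef).tail hfa).trans (h₁ ▸ hbe₁.swap.symm))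
      exact ⟨haf₁, haf₂, h₁ ▸ hbe₁, hce₂.tail ⟨hae₂, haf₂, .inl ⟨rfl, hn⟩⟩⟩
    · have haf₂ : G.Adj a f.2 := h₂ ▸ hae₂
      have haf₁ : G.Adj a f.1 := by
        by_contra h
        have hfa : G.Forces f (a, f.2) := ⟨hf, haf₂, .inr ⟨rfl, fun h' => h h'.symm⟩⟩
        exact hc (((he.tail hef).tail hfa).trans (h₂ ▸ hce₂.symm))
      exact ⟨haf₁, haf₂, hbe₁.tail ⟨hae₁, haf₁, .inl ⟨rfl, hn⟩⟩, h₂ ▸ hce₂⟩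

end Forcing

section Orientation

variable (G) in
structure IsOrientation (A : V → V → Prop) : Prop where
  asymm : ∀ ⦃u v⦄, A u v → ¬ A v u
  adj_iff : ∀ u v, G.Adj u v ↔ A u v ∨ A v u

variable (G) in
structure IsQuasiTransitiveOrientation (A : V → V → Prop) : Prop extends G.IsOrientation A where
  adj_of_arc_of_arc : ∀ ⦃u z w⦄, A u z → A z w → u ≠ w → G.Adj u w

variable (G) in
structure IsTransitiveOrientation (T : V → V → Prop) : Prop extends G.IsOrientation T where
  trans : ∀ ⦃u v w⦄, T u v → T v w → T u w

variable {A : V → V → Prop}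

theorem IsOrientation.adj (hA : G.IsOrientation A) {u v : V} (h : A u v) : G.Adj u v :=
  (hA.adj_iff u v).2 (.inl h)

theorem IsQuasiTransitiveOrientation.arc_of_forces (hA : G.IsQuasiTransitiveOrientation A)
    {e f : V × V} (h : G.Forces e f) (he : A e.1 e.2) : A f.1 f.2 := by
  obtain ⟨-, hf, ⟨h₁, hn⟩ | ⟨h₂, hn⟩⟩ := h
  · refine ((hA.adj_iff _ _).1 hf).resolve_right fun hfa => ?_
    rw [← h₁] at hfa
    by_cases hne : f.2 = e.2
    · exact hA.asymm he (hne ▸ hfa)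
    · exact hn (hA.adj_of_arc_of_arc hfa he hne).symm
  · refine ((hA.adj_iff _ _).1 hf).resolve_right fun hfa => ?_
    rw [← h₂] at hfa
    by_cases hne : e.1 = f.1
    · exact hA.asymm he (hne ▸ hfa)
    · exact hn (hA.adj_of_arc_of_arc he hfa hne)

theorem IsQuasiTransitiveOrientation.arc_iff (hA : G.IsQuasiTransitiveOrientation A) {e f : V × V}
    (h : G.SameImplClass e f) : A e.1 e.2 ↔ A f.1 f.2 := by
  suffices ∀ {e f}, G.SameImplClass e f → A e.1 e.2 → A f.1 f.2 from ⟨this h, this h.symm⟩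
  intro e f h
  induction h with
  | refl => exact id
  | tail _ hstep ih => exact hA.arc_of_forces hstep ∘ ih

end Orientation

section ImplClass

variable (G) in
def implClass (e : V × V) (u v : V) : Prop := G.SameImplClass e (u, v)

variable (G) in
def deleteImplClass (e : V × V) : SimpleGraph V := G \ fromRel (G.implClass e)

theorem sdiff_fromRel_adj {C : V → V → Prop} {u v : V} :
    (G \ fromRel C).Adj u v ↔ G.Adj u v ∧ ¬ C u v ∧ ¬ C v u := by
  rw [sdiff_adj, fromRel_adj]
  exact ⟨fun ⟨h, hC⟩ => ⟨h, fun h' => hC ⟨h.ne, .inl h'⟩, fun h' => hC ⟨h.ne, .inr h'⟩⟩,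
    fun ⟨h, h₁, h₂⟩ => ⟨h, fun ⟨_, h'⟩ => h'.elim h₁ h₂⟩⟩

variable {e f g : V × V}

theorem SameImplClass.deleteImplClass_adj (h : G.SameImplClass f g)
    (hf : (G.deleteImplClass e).Adj f.1 f.2) : (G.deleteImplClass e).Adj g.1 g.2 := by
  rw [deleteImplClass, sdiff_fromRel_adj] at hf ⊢
  exact ⟨h.adj hf.1, fun hg => hf.2.1 (hg.trans h.symm),
    fun hg => hf.2.2 (hg.trans h.symm.swap)⟩

theorem implClass_trans (he : G.Adj e.1 e.2)
    (hasymm : ∀ ⦃u v⦄, G.implClass e u v → ¬ G.implClass e v u) :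
    ∀ ⦃u v w⦄, G.implClass e u v → G.implClass e v w → G.implClass e u w := by
  intro u v w huv hvw
  have hadj : G.Adj u w := by
    by_contra h
    exact hasymm hvw (huv.tail ⟨huv.adj he, (hvw.adj he).symm, .inr ⟨rfl, h⟩⟩)
  by_contra huw
  have hvw' : G.SameImplClass (v, w) (u, v) := hvw.symm.trans huv
  exact (hvw'.triangle (huv.adj he) hadj (fun h => huw (hvw.trans h))
    (fun h => hasymm huv (hvw.trans h))).1.ne rfl

theorem sameImplClass_of_deleteImplClass_adj {z u w : V}
    (hu : (G.deleteImplClass e).Adj z u) (hw : (G.deleteImplClass e).Adj z w)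
    (huw : G.implClass e u w) :
    G.SameImplClass (z, u) (z, e.1) ∧ G.SameImplClass (z, w) (z, e.2) := by
  rw [deleteImplClass, sdiff_fromRel_adj] at hu hw
  obtain ⟨-, -, h₁, h₂⟩ := SameImplClass.triangle (e := e) hu.1 hw.1
    (fun h => hw.2.1 (huw.trans h)) (fun h => hu.2.2 (huw.trans h)) huw.symm
  exact ⟨h₁, h₂⟩

theorem isQuasiTransitiveOrientation_deleteImplClass {B : V → V → Prop}
    (hB : (G.deleteImplClass e).IsOrientation B)
    (hinv : ∀ f g, G.SameImplClass f g → B f.1 f.2 → B g.1 g.2)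
    (halign : ∀ z, (G.deleteImplClass e).Adj z e.1 → (G.deleteImplClass e).Adj z e.2 →
      (B z e.1 ↔ B z e.2)) :
    (G.deleteImplClass e).IsQuasiTransitiveOrientation B := by
  -- A 2-path `u → z → w` can only be induced if `uw` was deleted; then the triangle lemma ties
  -- `zu` and `zw` to `z e.1` and `z e.2`, where `B` is aligned.
  refine ⟨hB, fun u z w huz hzw _ => ?_⟩
  have hzu := (hB.adj huz).symm
  have hzw' := hB.adj hzw
  have hBzu : ¬ B z u := hB.asymm huz
  have hclass {x y} (hzx : (G.deleteImplClass e).Adj z x) (hzy : (G.deleteImplClass e).Adj z y)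
      (hx : G.SameImplClass (z, x) (z, e.1)) (hy : G.SameImplClass (z, y) (z, e.2)) :
      B z x ↔ B z y :=
    calc B z x ↔ B z e.1 := ⟨hinv _ _ hx, hinv _ _ hx.symm⟩
      _ ↔ B z e.2 := halign z (hx.deleteImplClass_adj hzx) (hy.deleteImplClass_adj hzy)
      _ ↔ B z y := ⟨hinv _ _ hy.symm, hinv _ _ hy⟩
  have hadj : G.Adj u w := by
    by_contra h
    have hf : G.Forces (z, w) (z, u) :=
      ⟨(sdiff_fromRel_adj.1 hzw').1, (sdiff_fromRel_adj.1 hzu).1, .inl ⟨rfl, fun h' => h h'.symm⟩⟩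
    exact hBzu (hinv _ _ hf.sameImplClass hzw)
  rw [deleteImplClass, sdiff_fromRel_adj]
  refine ⟨hadj, fun huw => ?_, fun hwu => ?_⟩
  · obtain ⟨h₁, h₂⟩ := sameImplClass_of_deleteImplClass_adj hzu hzw' huw
    exact hBzu ((hclass hzu hzw' h₁ h₂).2 hzw)
  · obtain ⟨h₁, h₂⟩ := sameImplClass_of_deleteImplClass_adj hzw' hzu hwu
    exact hBzu ((hclass hzw' hzu h₁ h₂).1 hzw)

end ImplClass

section Reorient

variable {A : V → V → Prop} {e : V × V}

theorem IsOrientation.restrict_reverse {H : SimpleGraph V} {F : V → V → Prop}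
    (hA : G.IsOrientation A) (hH : H ≤ G) (hF : ∀ ⦃u v⦄, F u v → F v u) :
    H.IsOrientation fun u v => H.Adj u v ∧ (A u v ↔ ¬ F u v) := by
  have hAF {u v} (h : H.Adj u v) : (A u v ∨ A v u) ∧ ¬ (A u v ∧ A v u) ∧ (F u v ↔ F v u) :=
    ⟨(hA.adj_iff u v).1 (hH h), fun h' => hA.asymm h'.1 h'.2, ⟨@hF _ _, @hF _ _⟩⟩
  refine ⟨fun u v ⟨huv, h⟩ ⟨_, h'⟩ => ?_, fun u v => ⟨fun huv => ?_, ?_⟩⟩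
  · have := hAF huv
    tauto
  · have := hAF huv
    have := huv.symm
    tauto
  · rintro (⟨h, -⟩ | ⟨h, -⟩)
    exacts [h, h.symm]

variable (G) in
/-- `x` lies on a path `e.1 → x → e.2` or `e.2 → x → e.1`. -/
def Between (A : V → V → Prop) (e : V × V) (x : V) : Prop :=
  (G.deleteImplClass e).Adj x e.1 ∧ (G.deleteImplClass e).Adj x e.2 ∧ ¬ (A x e.1 ↔ A x e.2)

variable (G) in
def Flipped (A : V → V → Prop) (e : V × V) (u v : V) : Prop :=
  ∃ x, G.Between A e x ∧ (G.SameImplClass (x, e.2) (u, v) ∨ G.SameImplClass (x, e.2) (v, u))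

variable (G) in
def reorient (A : V → V → Prop) (e : V × V) (u v : V) : Prop :=
  (G.deleteImplClass e).Adj u v ∧ (A u v ↔ ¬ G.Flipped A e u v)

theorem Between.triangle (hA : G.IsQuasiTransitiveOrientation A) (he : G.Adj e.1 e.2) {x : V}
    (hx : G.Between A e x) {f : V × V} (hf : G.SameImplClass (x, e.2) f) :
    G.Adj e.1 f.1 ∧ G.Adj e.1 f.2 ∧ G.SameImplClass (e.1, x) (e.1, f.1) := by
  obtain ⟨hx₁, hx₂, hA₁₂⟩ := hx
  rw [deleteImplClass, sdiff_fromRel_adj] at hx₁ hx₂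
  obtain ⟨h₁, h₂, h₃, -⟩ := hf.triangle hx₁.1.symm he (fun h => hx₂.2.1 h.symm)
    (fun h => hA₁₂ (hA.arc_iff h).symm)
  exact ⟨h₁, h₂, h₃⟩

theorem Flipped.of_sameImplClass {u v u' v' : V} (h : G.Flipped A e u v)
    (huv : G.SameImplClass (u, v) (u', v')) : G.Flipped A e u' v' := by
  obtain ⟨x, hx, hxuv | hxvu⟩ := h
  exacts [⟨x, hx, .inl (hxuv.trans huv)⟩, ⟨x, hx, .inr (hxvu.trans huv.swap)⟩]

theorem not_flipped_fst (hA : G.IsQuasiTransitiveOrientation A) (he : G.Adj e.1 e.2) (z : V) :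
    ¬ G.Flipped A e z e.1 := by
  rintro ⟨x, hx, h | h⟩
  · exact (hx.triangle hA he h).2.1.ne rfl
  · exact (hx.triangle hA he h).1.ne rfl

theorem flipped_snd_iff_between (hA : G.IsQuasiTransitiveOrientation A) (he : G.Adj e.1 e.2)
    {z : V} :
    G.Flipped A e z e.2 ↔ G.Between A e z := by
  refine ⟨fun ⟨x, hx, h⟩ => ?_, fun hz => ⟨z, hz, .inl (.refl _)⟩⟩
  rcases h with h | h
  · have hxz : G.SameImplClass (x, e.1) (z, e.1) := (hx.triangle hA he h).2.2.swap
    obtain ⟨hx₁, hx₂, hA₁₂⟩ := hx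
    exact ⟨hxz.deleteImplClass_adj hx₁, h.deleteImplClass_adj hx₂, by
      rwa [← hA.arc_iff hxz, ← hA.arc_iff h]⟩
  · have h₁ := (hx.triangle hA he h).2.2
    rw [Between, deleteImplClass, sdiff_fromRel_adj] at hx
    exact absurd h₁.symm hx.1.2.2

theorem isQuasiTransitiveOrientation_reorient (hA : G.IsQuasiTransitiveOrientation A)
    (he : G.Adj e.1 e.2) :
    (G.deleteImplClass e).IsQuasiTransitiveOrientation (G.reorient A e) := by
  refine isQuasiTransitiveOrientation_deleteImplClass
    (hA.restrict_reverse sdiff_le fun u v ⟨x, hx, h⟩ => ⟨x, hx, h.symm⟩) ?_ ?_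
  · rintro f g hfg ⟨hf, hAF⟩
    have hFfg : G.Flipped A e f.1 f.2 ↔ G.Flipped A e g.1 g.2 :=
      ⟨fun h => h.of_sameImplClass hfg, fun h => h.of_sameImplClass hfg.symm⟩
    exact ⟨hfg.deleteImplClass_adj hf, by rwa [← hA.arc_iff hfg, ← hFfg]⟩
  · intro z hz₁ hz₂
    have h₁ := not_flipped_fst hA he z
    have h₂ := flipped_snd_iff_between hA he (z := z)
    simp only [reorient, Between] at h₂ ⊢
    tauto

end Reorient

section Lift

variable {C T : V → V → Prop}

theorem IsTransitiveOrientation.sup_of_sdiff (hCadj : ∀ ⦃u v⦄, C u v → G.Adj u v)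
    (hCasymm : ∀ ⦃u v⦄, C u v → ¬ C v u) (hCtrans : ∀ ⦃u v w⦄, C u v → C v w → C u w)
    (hCforces : ∀ ⦃f g : V × V⦄, C f.1 f.2 → G.Forces f g → C g.1 g.2)
    (hT : (G \ fromRel C).IsTransitiveOrientation T) :
    G.IsTransitiveOrientation fun u v => C u v ∨ T u v := by
  have hTadj {u v} (h : T u v) : G.Adj u v ∧ ¬ C u v ∧ ¬ C v u := sdiff_fromRel_adj.1 (hT.adj h)
  have hTcompl {u v} (h : G.Adj u v) (h₁ : ¬ C u v) (h₂ : ¬ C v u) : T u v ∨ T v u :=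
    (hT.adj_iff u v).1 (sdiff_fromRel_adj.2 ⟨h, h₁, h₂⟩)
  refine ⟨⟨?_, fun u v => ⟨fun huv => ?_, ?_⟩⟩, ?_⟩
  · rintro u v (h | h) (h' | h')
    exacts [hCasymm h h', (hTadj h').2.2 h, (hTadj h).2.2 h', hT.asymm h h']
  · by_cases h₁ : C u v
    · exact .inl (.inl h₁)
    by_cases h₂ : C v u
    · exact .inr (.inl h₂)
    exact (hTcompl huv h₁ h₂).imp .inr .inr
  · rintro ((h | h) | (h | h))
    exacts [hCadj h, (hTadj h).1, (hCadj h).symm, (hTadj h).1.symm]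
  rintro a b c (hab | hab) (hbc | hbc)
  · exact .inl (hCtrans hab hbc)
  · obtain ⟨hbc', -, hncb⟩ := hTadj hbc
    have hac : G.Adj a c := by
      by_contra h
      exact hncb (hCforces (f := (a, b)) (g := (c, b)) hab ⟨hCadj hab, hbc'.symm, .inr ⟨rfl, h⟩⟩)
    by_cases hCac : C a c
    · exact .inl hCac
    by_cases hCca : C c a
    · exact absurd (hCtrans hCca hab) hncb
    exact .inr ((hTcompl hac hCac hCca).resolve_right fun hca => (hTadj (hT.trans hbc hca)).2.2 hab)
  · obtain ⟨hab', -, hnba⟩ := hTadj hab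
    have hac : G.Adj a c := by
      by_contra h
      exact hnba (hCforces (f := (b, c)) (g := (b, a)) hbc
        ⟨hCadj hbc, hab'.symm, .inl ⟨rfl, fun h' => h h'.symm⟩⟩)
    by_cases hCac : C a c
    · exact .inl hCac
    by_cases hCca : C c a
    · exact absurd (hCtrans hbc hCca) hnba
    exact .inr ((hTcompl hac hCac hCca).resolve_right fun hca => (hTadj (hT.trans hca hab)).2.2 hbc)
  · exact .inr (hT.trans hab hbc)

end Lift

theorem IsQuasiTransitiveOrientation.exists_isTransitiveOrientation [Finite V] {A : V → V → Prop}
    (hA : G.IsQuasiTransitiveOrientation A) : ∃ T, G.IsTransitiveOrientation T := by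
  induction G using WellFoundedLT.induction generalizing A with
  | _ G ih =>
  by_cases h : ∃ u v, A u v
  swap
  · push Not at h
    exact ⟨A, hA.toIsOrientation, fun u v _ huv => (h u v huv).elim⟩
  obtain ⟨a, b, hab⟩ := h
  have he : G.Adj (a, b).1 (a, b).2 := hA.adj hab
  have hCA {u v} (h : G.implClass (a, b) u v) : A u v := (hA.arc_iff h).1 hab
  have hCasymm {u v} (h : G.implClass (a, b) u v) (h' : G.implClass (a, b) v u) : False :=
    hA.asymm (hCA h) (hCA h')
  have hlt : G.deleteImplClass (a, b) < G := by
    refine lt_of_le_of_ne sdiff_le fun h => ?_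
    rw [← h, deleteImplClass, sdiff_fromRel_adj] at he
    exact he.2.1 (.refl _)
  obtain ⟨T, hT⟩ := ih _ hlt (isQuasiTransitiveOrientation_reorient hA he)
  exact ⟨_, hT.sup_of_sdiff (fun u v h => h.adj he) (fun u v => hCasymm)
    (implClass_trans he fun u v => hCasymm) fun f g hf hfg => hf.tail hfg⟩

theorem IsTransitiveOrientation.exists_isPartialOrder {T : V → V → Prop}
    (hT : G.IsTransitiveOrientation T) :
    ∃ r : V → V → Prop, IsPartialOrder V r ∧ ∀ u v, u ≠ v → (G.Adj u v ↔ r u v ∨ r v u) := by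
  refine ⟨fun u v => u = v ∨ T u v, { refl := fun _ => .inl rfl, trans := ?_, antisymm := ?_ },
    fun u v huv => ?_⟩
  · rintro u v w (rfl | huv) (rfl | hvw)
    exacts [.inl rfl, .inr hvw, .inr huv, .inr (hT.trans huv hvw)]
  · rintro u v (rfl | huv) (h | hvu)
    exacts [rfl, rfl, h.symm, (hT.asymm huv hvu).elim]
  · simp only [hT.adj_iff, huv, huv.symm, false_or]

theorem isTransitiveOrientation_of_isPartialOrder {r : V → V → Prop} (hr : IsPartialOrder V r)
    (hG : ∀ u v, u ≠ v → (G.Adj u v ↔ r u v ∨ r v u)) :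
    G.IsTransitiveOrientation fun u v => r u v ∧ u ≠ v := by
  refine ⟨⟨fun u v ⟨huv, hne⟩ ⟨hvu, _⟩ => hne (hr.antisymm _ _ huv hvu), fun u v => ?_⟩, ?_⟩
  · by_cases huv : u = v
    · subst huv
      simp
    · rw [hG u v huv]
      exact ⟨(·.imp (⟨·, huv⟩) (⟨·, Ne.symm huv⟩)), (·.imp And.left And.left)⟩
  · rintro u v w ⟨huv, hne⟩ ⟨hvw, -⟩
    refine ⟨hr.trans _ _ _ huv hvw, ?_⟩
    rintro rfl
    exact hne (hr.antisymm _ _ huv hvw)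

end SimpleGraph

theorem stmt_7 {V : Type*} [Fintype V] (Γ : SimpleGraph V) :
    (∃ A : V → V → Prop,
        (∀ u, ¬ A u u) ∧ (∀ u v, A u v → ¬ A v u) ∧
        (∀ u v, Γ.Adj u v ↔ (A u v ∨ A v u)) ∧
        (∀ u z w, A u z → A z w → u ≠ w → (A u w ∨ A w u))) ↔
    (∃ r : V → V → Prop, IsPartialOrder V r ∧
        ∀ u v, u ≠ v → (Γ.Adj u v ↔ (r u v ∨ r v u))) := by
  constructor
  · rintro ⟨A, -, hasymm, hadj, hqt⟩
    have hA : Γ.IsQuasiTransitiveOrientation A :=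
      ⟨⟨hasymm, hadj⟩, fun u z w huz hzw hne => (hadj u w).2 (hqt u z w huz hzw hne)⟩
    obtain ⟨T, hT⟩ := hA.exists_isTransitiveOrientation
    exact hT.exists_isPartialOrder
  · rintro ⟨r, hr, hadj⟩
    have hT := Γ.isTransitiveOrientation_of_isPartialOrder hr hadj
    exact ⟨_, fun u h => h.2 rfl, fun u v => @hT.asymm u v, hT.adj_iff,
      fun u z w huz hzw _ => .inl (hT.trans huz hzw)⟩
end

section
/- Let t ≥ 2 and let G be any orientation of tK2, the graph consisting of t pairwise disjoint edges (so G has 2t vertices and t pairwise non-incident arcs). Then for every finite simple graph Γ there exists a natural number k such that f(Γ,k) ≠ f_o(G,k); that is, no simple graph is chromatically equivalent to G. -/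
/-- The number of proper `k`-colourings of a simple graph. -/
noncomputable def chromCount {W : Type*} (Γ : SimpleGraph W) (k : ℕ) : ℕ :=
  Nat.card {c : W → Fin k // ∀ u v, Γ.Adj u v → c u ≠ c v}

/-! If `Γ` and `G` were chromatically equivalent, the two counting functions would agree to
second order in `k`. A colouring fails to be proper (resp. oriented) only if some edge is
monochromatic (resp. some arc is monochromatic or is mapped onto the reverse of another
arc), and each such event fixes one or two colours; by inclusion–exclusion this forces `Γ`
to have `2t` vertices and at most `t` edges. Then `Γ` is disconnected since `t ≥ 2`, so it
has either no proper 2-colouring or at least four, while `G` has one or two oriented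
2-colourings. -/

open Finset

theorem exists_mul_pow_lt_pow_succ (c e : ℕ) : ∃ k, 0 < k ∧ c * k ^ e < k ^ (e + 1) :=
  ⟨c + 1, c.succ_pos, by
    rw [pow_succ']
    exact Nat.mul_lt_mul_of_pos_right c.lt_succ_self (by positivity)⟩

theorem le_of_forall_pow_le_add {f : ℕ → ℕ} {n d a b : ℕ}
    (hlow : ∀ k, k ^ n ≤ f k + a * k ^ (n - 1) + b * k ^ (n - 2)) (hup : ∀ k, f k ≤ k ^ d) :
    n ≤ d := by
  by_contra! hdn
  obtain ⟨e, rfl⟩ : ∃ e, n = e + 1 := ⟨n - 1, by omega⟩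
  obtain ⟨k, hk, hlt⟩ := exists_mul_pow_lt_pow_succ (1 + a + b) e
  have hd : k ^ d ≤ k ^ e := Nat.pow_le_pow_right hk (by omega)
  have hb : b * k ^ (e + 1 - 2) ≤ b * k ^ e :=
    Nat.mul_le_mul_left _ (Nat.pow_le_pow_right hk (by omega))
  have hl := hlow k
  have hu := hup k
  rw [Nat.add_sub_cancel] at hl
  nlinarith

theorem le_of_forall_add_pow_le {f : ℕ → ℕ} {n m a B C : ℕ} (hn : 2 ≤ n)
    (hup : ∀ k, f k + m * k ^ (n - 1) ≤ k ^ n + B * k ^ (n - 2))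
    (hlow : ∀ k, k ^ n ≤ f k + a * k ^ (n - 1) + C * k ^ (n - 2)) : m ≤ a := by
  by_contra! ham
  obtain ⟨e, rfl⟩ : ∃ e, n = e + 2 := ⟨n - 2, by omega⟩
  obtain ⟨k, -, hlt⟩ := exists_mul_pow_lt_pow_succ (B + C) e
  have hm : (a + 1) * k ^ (e + 1) ≤ m * k ^ (e + 1) := Nat.mul_le_mul_right _ ham
  have hu := hup k
  have hl := hlow k
  simp only [Nat.add_sub_cancel, show e + 2 - 1 = e + 1 by omega] at hu hl
  nlinarith

theorem eq_of_ne_of_ne_of_card_eq_two {α : Type*} [Fintype α] (h : Fintype.card α = 2)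
    {a b c : α} (ha : a ≠ c) (hb : b ≠ c) : a = b := by
  classical
  by_contra hab
  have := card_le_univ ({a, b, c} : Finset α)
  rw [card_eq_three.2 ⟨a, b, c, hab, ha, hb, rfl⟩] at this
  omega

theorem Finset.sum_card_le_card_biUnion_add {ι α : Type*} [DecidableEq ι] [DecidableEq α]
    (F : ι → Finset α) (s : Finset ι) :
    ∑ i ∈ s, #(F i) ≤ #(s.biUnion F) + ∑ i ∈ s, ∑ j ∈ s.erase i, #(F i ∩ F j) := by
  induction s using Finset.induction_on with
  | empty => simp
  | insert a s ha ih =>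
    have hunion :
        #(F a) + #(s.biUnion F) = #((insert a s).biUnion F) + #(F a ∩ s.biUnion F) := by
      rw [biUnion_insert, card_union_add_card_inter]
    have hinter : #(F a ∩ s.biUnion F) ≤ ∑ j ∈ s, #(F a ∩ F j) := by
      rw [inter_biUnion]; exact card_biUnion_le
    have hmono : ∑ i ∈ s, ∑ j ∈ s.erase i, #(F i ∩ F j) ≤
        ∑ i ∈ s, ∑ j ∈ (insert a s).erase i, #(F i ∩ F j) :=
      sum_le_sum fun i _ => sum_le_sum_of_subset (erase_subset_erase _ (subset_insert _ _))
    rw [sum_insert ha, sum_insert ha, erase_insert ha]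
    omega

section Monochromatic

variable {W : Type*} [Fintype W] [DecidableEq W]

theorem card_filter_apply_eq_apply (k : ℕ) {x y : W} (hxy : x ≠ y) :
    #{f : W → Fin k | f x = f y} = k ^ (Fintype.card W - 1) := by
  let e : {f : W → Fin k // f x = f y} ≃ ({w // w ≠ y} → Fin k) :=
    { toFun f w := f.1 w
      invFun g := ⟨fun w => if h : w = y then g ⟨x, hxy⟩ else g ⟨w, h⟩, by simp [hxy]⟩
      left_inv f := by
        ext w
        by_cases h : w = y
        · subst h; simp [f.2]
        · simp [h]
      right_inv g := by ext w; simp [w.2] }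
  rw [← Fintype.card_subtype, Fintype.card_congr e, Fintype.card_fun, Fintype.card_fin,
    Fintype.card_subtype_compl, Fintype.card_subtype_eq]

theorem card_filter_apply_eq_apply_and_le (k : ℕ) {x y b p : W} (hxy : x ≠ y) (hbp : b ≠ p)
    (hbx : b ≠ x) (hby : b ≠ y) :
    #{f : W → Fin k | f x = f y ∧ f b = f p} ≤ k ^ (Fintype.card W - 2) := by
  let restrict (f : W → Fin k) (w : {w // w ≠ y ∧ w ≠ b}) : Fin k := f w
  have hinj : Set.InjOn restrict {f | f x = f y ∧ f b = f p} := by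
    rintro f ⟨hfx, hfb⟩ g ⟨hgx, hgb⟩ hfg
    have hoff : ∀ w, w ≠ y → w ≠ b → f w = g w :=
      fun w hwy hwb => congrFun hfg ⟨w, hwy, hwb⟩
    have hoff_b : ∀ w, w ≠ b → f w = g w := by
      intro w hw
      by_cases hwy : w = y
      · subst hwy; rw [← hfx, ← hgx]; exact hoff x hxy hbx.symm
      · exact hoff w hwy hw
    ext1 w
    by_cases hwb : w = b
    · subst hwb; rw [hfb, hgb]; exact hoff_b p hbp.symm
    · exact hoff_b w hwb
  calc #{f : W → Fin k | f x = f y ∧ f b = f p}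
      ≤ #(univ : Finset ({w // w ≠ y ∧ w ≠ b} → Fin k)) :=
        card_le_card_of_injOn restrict (fun _ _ => mem_coe.2 (mem_univ _))
          (by simpa using hinj)
    _ = k ^ (Fintype.card W - 2) := by
      have hfilter : ({w | w ≠ y ∧ w ≠ b} : Finset W) = univ \ {y, b} := by ext; simp
      rw [card_univ, Fintype.card_fun, Fintype.card_fin, Fintype.card_subtype, hfilter,
        card_univ_sdiff, card_pair hby.symm]

def monochromatic (k : ℕ) (e : Sym2 W) : Finset (W → Fin k) :=
  {f | (e.map f).IsDiag}

theorem card_monochromatic (k : ℕ) {e : Sym2 W} (he : ¬ e.IsDiag) :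
    #(monochromatic k e) = k ^ (Fintype.card W - 1) := by
  induction e using Sym2.ind with
  | _ x y =>
    simpa [monochromatic] using card_filter_apply_eq_apply k (Sym2.mk_isDiag_iff.not.1 he)

theorem card_monochromatic_inter_le (k : ℕ) {e e' : Sym2 W} (he : ¬ e.IsDiag)
    (he' : ¬ e'.IsDiag) (hne : e ≠ e') :
    #(monochromatic k e ∩ monochromatic k e') ≤ k ^ (Fintype.card W - 2) := by
  induction e using Sym2.ind with | _ x y =>
  induction e' using Sym2.ind with | _ p b =>
  rw [Sym2.mk_isDiag_iff] at he he'
  wlog hb : b ∉ s(x, y) generalizing p b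
  · have hp : p ∉ s(x, y) := fun hp => hne (Sym2.eq_of_ne_mem he' hp (not_not.1 hb)
      (Sym2.mem_mk_left p b) (Sym2.mem_mk_right p b))
    rw [Sym2.eq_swap (a := p)] at hne ⊢
    exact this b p (Ne.symm he') hne hp
  rw [Sym2.mem_iff, not_or] at hb
  have hinter : monochromatic k s(x, y) ∩ monochromatic k s(p, b) =
      ({f | f x = f y ∧ f b = f p} : Finset (W → Fin k)) := by
    ext f; simp [monochromatic, eq_comm]
  rw [hinter]
  exact card_filter_apply_eq_apply_and_le k he (Ne.symm he') hb.1 hb.2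

end Monochromatic

section Chromatic

variable {W : Type*} [Fintype W] [DecidableEq W] (Γ : SimpleGraph W) [DecidableRel Γ.Adj]
  (k : ℕ)

theorem chromCount_eq_card_sdiff :
    chromCount Γ k = #(univ \ Γ.edgeFinset.biUnion (monochromatic k)) := by
  rw [chromCount, Nat.card_eq_fintype_card, Fintype.card_subtype]
  congr 1
  ext f
  simp [monochromatic, Sym2.forall]

theorem chromCount_le_pow : chromCount Γ k ≤ k ^ Fintype.card W := by
  rw [chromCount_eq_card_sdiff]
  exact (card_le_univ _).trans (by simp)

theorem card_add_chromCount :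
    #(Γ.edgeFinset.biUnion (monochromatic k)) + chromCount Γ k = k ^ Fintype.card W := by
  rw [chromCount_eq_card_sdiff, add_comm, card_sdiff_add_card_eq_card (subset_univ _)]
  simp

theorem pow_le_chromCount_add :
    k ^ Fintype.card W ≤ chromCount Γ k + #Γ.edgeFinset * k ^ (Fintype.card W - 1) := by
  have hunion : #(Γ.edgeFinset.biUnion (monochromatic k)) ≤
      #Γ.edgeFinset * k ^ (Fintype.card W - 1) :=
    card_biUnion_le.trans <| sum_le_card_nsmul _ _ _ fun e he =>
      (card_monochromatic k (Γ.not_isDiag_of_mem_edgeFinset he)).le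
  have := card_add_chromCount Γ k
  omega

theorem chromCount_add_le :
    chromCount Γ k + #Γ.edgeFinset * k ^ (Fintype.card W - 1) ≤
      k ^ Fintype.card W + #Γ.edgeFinset ^ 2 * k ^ (Fintype.card W - 2) := by
  have hsingle : ∑ e ∈ Γ.edgeFinset, #(monochromatic k e) =
      #Γ.edgeFinset * k ^ (Fintype.card W - 1) := by
    rw [sum_congr rfl fun e he => card_monochromatic k (Γ.not_isDiag_of_mem_edgeFinset he),
      sum_const, smul_eq_mul]
  have hpairs : ∑ e ∈ Γ.edgeFinset, ∑ e' ∈ Γ.edgeFinset.erase e,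
      #(monochromatic k e ∩ monochromatic k e') ≤
        #Γ.edgeFinset ^ 2 * k ^ (Fintype.card W - 2) := by
    calc _ ≤ ∑ _e ∈ Γ.edgeFinset, #Γ.edgeFinset * k ^ (Fintype.card W - 2) :=
        sum_le_sum fun e he =>
          (sum_le_card_nsmul _ _ _ fun e' he' => card_monochromatic_inter_le k
            (Γ.not_isDiag_of_mem_edgeFinset he)
            (Γ.not_isDiag_of_mem_edgeFinset (mem_of_mem_erase he'))
            (ne_of_mem_erase he').symm).trans
          (Nat.mul_le_mul_right _ card_erase_le)
      _ = _ := by rw [sum_const, smul_eq_mul]; ring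
  have := sum_card_le_card_biUnion_add (monochromatic k) Γ.edgeFinset
  have := card_add_chromCount Γ k
  omega

end Chromatic

theorem sq_le_chromCount_of_not_reachable {W : Type*} [Finite W] (Γ : SimpleGraph W) {k : ℕ}
    [NeZero k] {a b : W} (hab : ¬ Γ.Reachable a b) {c : W → Fin k}
    (hc : ∀ u v, Γ.Adj u v → c u ≠ c v) : k ^ 2 ≤ chromCount Γ k := by
  classical
  let shift (p : Fin k × Fin k) (w : W) : Fin k :=
    (if Γ.Reachable a w then p.1 else 0) + (if Γ.Reachable b w then p.2 else 0)
  have hshift : ∀ p u v, Γ.Adj u v → shift p u = shift p v := by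
    intro p u v huv
    have hreach : ∀ z, Γ.Reachable z u ↔ Γ.Reachable z v :=
      fun z => ⟨fun h => h.trans huv.reachable, fun h => h.trans huv.symm.reachable⟩
    simp only [shift, hreach]
  have hba : ¬ Γ.Reachable b a := fun h => hab h.symm
  have hshift_a : ∀ p, shift p a = p.1 := fun p => by simp [shift, hba]
  have hshift_b : ∀ p, shift p b = p.2 := fun p => by simp [shift, hab]
  let recolour (p : Fin k × Fin k) : {c : W → Fin k // ∀ u v, Γ.Adj u v → c u ≠ c v} :=
    ⟨c + shift p, fun u v huv => by simpa [hshift p u v huv] using hc u v huv⟩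
  have hinj : Function.Injective recolour := by
    intro p q hpq
    have hval := congrArg Subtype.val hpq
    have ha := congrFun hval a
    have hb := congrFun hval b
    simp only [recolour, Pi.add_apply, hshift_a, hshift_b, add_right_inj] at ha hb
    exact Prod.ext ha hb
  simpa [sq, chromCount] using Nat.card_le_card_of_injective recolour hinj

section Oriented

variable {V : Type*} {A : V → V → Prop}

theorem OColoring.apply_eq_of_fin_two {c : V → Fin 2} (hc : OColoring A c) {u v x y : V}
    (huv : A u v) (hxy : A x y) : c u = c x := by
  by_contra hne
  exact hc.2 u v x y huv hxy (eq_of_ne_of_ne_of_card_eq_two rfl hne (hc.1 x y hxy).symm)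
    (eq_of_ne_of_ne_of_card_eq_two rfl (hc.1 u v huv).symm (Ne.symm hne))

theorem foO_two_le_two [Finite V] [Nonempty V] (hcover : ∀ w, ∃ x, A w x ∨ A x w) :
    foO A 2 ≤ 2 := by
  obtain ⟨u₀, v₀, h₀⟩ : ∃ u₀ v₀, A u₀ v₀ := by
    obtain ⟨x, hx | hx⟩ := hcover (Classical.arbitrary V) <;> exact ⟨_, _, hx⟩
  have hinj : Function.Injective fun c : {c : V → Fin 2 // OColoring A c} => c.1 u₀ := by
    rintro ⟨c, hc⟩ ⟨c', hc'⟩ (h : c u₀ = c' u₀)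
    refine Subtype.ext (funext fun w => ?_)
    dsimp only
    obtain ⟨x, hwx | hxw⟩ := hcover w
    · rw [hc.apply_eq_of_fin_two hwx h₀, hc'.apply_eq_of_fin_two hwx h₀, h]
    · refine eq_of_ne_of_ne_of_card_eq_two (c := c x) rfl (hc.1 x w hxw).symm ?_
      rw [hc.apply_eq_of_fin_two hxw h₀, h, ← hc'.apply_eq_of_fin_two hxw h₀]
      exact (hc'.1 x w hxw).symm
  simpa [foO] using Nat.card_le_card_of_injective _ hinj

theorem foO_two_pos [Finite V] (hA : ∀ u v w, A u v → ¬ A v w) : 0 < foO A 2 := by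
  classical
  let c (v : V) : Fin 2 := if ∃ w, A v w then 0 else 1
  have hsink : ∀ u v, A u v → c v = 1 := fun u v huv =>
    if_neg fun ⟨w, hvw⟩ => hA u v w huv hvw
  have hsource : ∀ u v, A u v → c u = 0 := fun u v huv => if_pos ⟨v, huv⟩
  have hc : OColoring A c := by
    refine ⟨fun u v huv => ?_, fun u v x y huv hxy huy _ => ?_⟩
    · simp [hsource u v huv, hsink u v huv]
    · simp [hsource u v huv, hsink x y hxy] at huy
  exact Nat.card_pos_iff.2 ⟨⟨⟨c, hc⟩⟩, inferInstance⟩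

theorem foO_le_pow [Fintype V] (k : ℕ) : foO A k ≤ k ^ Fintype.card V := by
  calc foO A k ≤ Nat.card (V → Fin k) := Nat.card_le_card_of_injective _ Subtype.val_injective
    _ = k ^ Fintype.card V := by
      rw [Nat.card_fun, Nat.card_eq_fintype_card (α := V), Nat.card_fin]

theorem card_monochromatic_inter_reversed_le [Fintype V] [DecidableEq V]
    (hA : ∀ u v w, A u v → ¬ A v w) (k : ℕ) {a b : V × V} (ha : A a.1 a.2) (hb : A b.1 b.2)
    (hab : a ≠ b) :
    #(monochromatic k s(a.1, b.2) ∩ monochromatic k s(a.2, b.1)) ≤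
      k ^ (Fintype.card V - 2) := by
  obtain ⟨u, v⟩ := a
  obtain ⟨x, y⟩ := b
  refine card_monochromatic_inter_le k ?_ ?_ ?_
  · rw [Sym2.mk_isDiag_iff]; rintro rfl; exact hA x u v hb ha
  · rw [Sym2.mk_isDiag_iff]; rintro rfl; exact hA u v y ha hb
  · dsimp only
    rw [Ne, Sym2.eq_iff]
    rintro (⟨rfl, -⟩ | ⟨rfl, rfl⟩)
    · exact hA u u u ha ha
    · exact hab rfl

theorem pow_le_foO_add [Fintype V] [DecidableEq V] [DecidableRel A]
    (hA : ∀ u v w, A u v → ¬ A v w) (k : ℕ) :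
    k ^ Fintype.card V ≤ foO A k + #{p : V × V | A p.1 p.2} * k ^ (Fintype.card V - 1) +
      #{p : V × V | A p.1 p.2} ^ 2 * k ^ (Fintype.card V - 2) := by
  classical
  set arcs : Finset (V × V) := {p | A p.1 p.2}
  have mem_arcs : ∀ {u v}, A u v → (u, v) ∈ arcs := fun h => mem_filter.2 ⟨mem_univ _, h⟩
  let arcMono := arcs.biUnion fun a => monochromatic k s(a.1, a.2)
  let reversed := arcs.biUnion fun a => (arcs.erase a).biUnion fun b =>
    monochromatic k s(a.1, b.2) ∩ monochromatic k s(a.2, b.1)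
  have hcover : ∀ c, c ∉ arcMono → c ∉ reversed → OColoring A c := by
    intro c h₁ h₂
    have hproper : ∀ u v, A u v → c u ≠ c v := fun u v huv hc =>
      h₁ (mem_biUnion.2 ⟨(u, v), mem_arcs huv, by simp [monochromatic, hc]⟩)
    refine ⟨hproper, fun u v x y huv hxy huy hvx => ?_⟩
    by_cases h : (x, y) = (u, v)
    · obtain ⟨rfl, rfl⟩ := Prod.ext_iff.1 h
      exact hproper x y huv huy
    · exact h₂ (mem_biUnion.2 ⟨(u, v), mem_arcs huv, mem_biUnion.2
        ⟨(x, y), mem_erase.2 ⟨h, mem_arcs hxy⟩, by simp [monochromatic, huy, hvx]⟩⟩)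
  have harcMono : #arcMono ≤ #arcs * k ^ (Fintype.card V - 1) :=
    card_biUnion_le.trans <| sum_le_card_nsmul _ _ _ fun a ha =>
      (card_monochromatic k <| Sym2.mk_isDiag_iff.not.2 fun h =>
        hA _ _ _ (mem_filter.1 ha).2 (h ▸ (mem_filter.1 ha).2)).le
  have hreversed : #reversed ≤ #arcs ^ 2 * k ^ (Fintype.card V - 2) := by
    calc #reversed ≤ ∑ _a ∈ arcs, #arcs * k ^ (Fintype.card V - 2) :=
          card_biUnion_le.trans <| sum_le_sum fun a ha => card_biUnion_le.trans <|
            (sum_le_card_nsmul _ _ _ fun b hb => card_monochromatic_inter_reversed_le hA k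
              (mem_filter.1 ha).2 (mem_filter.1 (mem_of_mem_erase hb)).2
              (ne_of_mem_erase hb).symm).trans (Nat.mul_le_mul_right _ card_erase_le)
      _ = _ := by rw [sum_const, smul_eq_mul]; ring
  let oriented : Finset (V → Fin k) := {c | OColoring A c}
  have hfoO : foO A k = #oriented := by
    rw [foO, Nat.card_eq_fintype_card, Fintype.card_subtype]
  have hunion : univ ⊆ oriented ∪ (arcMono ∪ reversed) := fun c _ => by
    by_contra h
    simp only [mem_union, not_or] at h
    exact h.1 (mem_filter.2 ⟨mem_univ c, hcover c h.2.1 h.2.2⟩)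
  calc k ^ Fintype.card V = #(univ : Finset (V → Fin k)) := by simp
    _ ≤ #oriented + (#arcMono + #reversed) :=
      (card_le_card hunion).trans <| (card_union_le _ _).trans <|
        Nat.add_le_add_left (card_union_le _ _) _
    _ ≤ _ := by omega

end Oriented

section MatchingOrientation

variable {t : ℕ} {A : Fin t × Bool → Fin t × Bool → Prop}
  (hU : ∀ u v, (A u v ∨ A v u) ↔ (u.1 = v.1 ∧ u.2 ≠ v.2))
include hU

theorem exists_arc_of_orientation (w : Fin t × Bool) : ∃ x, A w x ∨ A x w :=
  ⟨(w.1, !w.2), (hU _ _).2 ⟨rfl, by simp⟩⟩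

theorem not_arc_of_arc_of_orientation (hAanti : ∀ u v, A u v → ¬ A v u) {u v w : Fin t × Bool}
    (huv : A u v) : ¬ A v w := by
  intro hvw
  obtain ⟨hj₁, hb₁⟩ := (hU u v).1 (Or.inl huv)
  obtain ⟨hj₂, hb₂⟩ := (hU v w).1 (Or.inl hvw)
  have huw : u = w :=
    Prod.ext (hj₁.trans hj₂) (eq_of_ne_of_ne_of_card_eq_two rfl hb₁ hb₂.symm)
  exact hAanti u v huv (huw ▸ hvw)

theorem card_arcs_le_of_orientation [DecidableRel A] (hAanti : ∀ u v, A u v → ¬ A v u) :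
    #{p : (Fin t × Bool) × (Fin t × Bool) | A p.1 p.2} ≤ t := by
  have hinj : Set.InjOn (fun p : (Fin t × Bool) × (Fin t × Bool) => p.1.1)
      ({p | A p.1 p.2} : Finset ((Fin t × Bool) × (Fin t × Bool))) := by
    rintro ⟨u, v⟩ huv ⟨x, y⟩ hxy (hj : u.1 = x.1)
    simp only [coe_filter, mem_univ, true_and, Set.mem_ofPred_eq] at huv hxy
    obtain ⟨hj₁, hb₁⟩ := (hU u v).1 (Or.inl huv)
    obtain ⟨hj₂, hb₂⟩ := (hU x y).1 (Or.inl hxy)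
    have hux : u = x := by
      refine Prod.ext hj (by_contra fun hb => ?_)
      have huy : u = y :=
        Prod.ext (hj.trans hj₂) (eq_of_ne_of_ne_of_card_eq_two rfl hb hb₂.symm)
      exact not_arc_of_arc_of_orientation hU hAanti hxy (huy ▸ huv)
    subst hux
    have hvy : v = y :=
      Prod.ext (hj₁.symm.trans hj₂) (eq_of_ne_of_ne_of_card_eq_two rfl hb₁.symm hb₂.symm)
    rw [hvy]
  simpa using card_le_card_of_injOn _ (fun _ _ => mem_coe.2 (mem_univ _)) hinj

theorem pow_le_foO_add_of_orientation (hAanti : ∀ u v, A u v → ¬ A v u) (k : ℕ) :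
    k ^ (2 * t) ≤ foO A k + t * k ^ (2 * t - 1) + t ^ 2 * k ^ (2 * t - 2) := by
  classical
  have hcard := card_arcs_le_of_orientation hU hAanti
  have hV : Fintype.card (Fin t × Bool) = 2 * t := by simp [mul_comm]
  have h := pow_le_foO_add (A := A) (fun _ _ _ => not_arc_of_arc_of_orientation hU hAanti) k
  rw [hV] at h
  exact h.trans (by gcongr)

end MatchingOrientation

theorem stmt_11_general (t : ℕ) (ht : 2 ≤ t)
    (A : Fin t × Bool → Fin t × Bool → Prop)
    (hAanti : ∀ u v, A u v → ¬ A v u)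
    (hU : ∀ u v, (A u v ∨ A v u) ↔ (u.1 = v.1 ∧ u.2 ≠ v.2)) :
    ∀ (W : Type) [Fintype W] (Γ : SimpleGraph W),
      ∃ k : ℕ, chromCount Γ k ≠ foO A k := by
  intro W _ Γ
  by_contra! hΓ
  classical
  have hfoO := pow_le_foO_add_of_orientation hU hAanti
  have hn : Fintype.card W = 2 * t := le_antisymm
    (le_of_forall_pow_le_add (b := 0) (fun k => by simpa [hΓ] using pow_le_chromCount_add Γ k)
      fun k => (foO_le_pow k).trans_eq (by simp [mul_comm]))
    (le_of_forall_pow_le_add hfoO fun k => hΓ k ▸ chromCount_le_pow Γ k)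
  have hm : #Γ.edgeFinset ≤ t := le_of_forall_add_pow_le (by omega)
    (fun k => by simpa [hΓ, hn] using chromCount_add_le Γ k) hfoO
  have hdisc : ¬ Γ.Preconnected := fun h => by
    have : Nonempty W := Fintype.card_pos_iff.1 (by omega)
    have := (Γ.connected_iff.2 ⟨h, this⟩).card_vert_le_card_edgeSet_add_one
    rw [Nat.card_eq_fintype_card, Nat.card_eq_fintype_card, ← SimpleGraph.edgeFinset_card] at this
    omega
  obtain ⟨a, b, hab⟩ : ∃ a b, ¬ Γ.Reachable a b := by
    simpa [SimpleGraph.Preconnected] using hdisc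
  have h2pos : 0 < chromCount Γ 2 :=
    (hΓ 2).symm ▸ foO_two_pos (A := A) fun _ _ _ => not_arc_of_arc_of_orientation hU hAanti
  obtain ⟨⟨c, hc⟩⟩ := (Nat.card_pos_iff.1 h2pos).1
  have : Nonempty (Fin t × Bool) := ⟨(⟨0, by omega⟩, false)⟩
  have h4 := sq_le_chromCount_of_not_reachable Γ hab hc
  have h2 := foO_two_le_two (exists_arc_of_orientation hU)
  rw [hΓ 2] at h4
  omega

/-- `G` (given by arc relation `A` on the vertices `Fin t × Bool`, the vertex `(j, false)`
playing the role of `u_j` and `(j, true)` that of `v_j`) is an orientation of `tK₂`: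
its underlying adjacencies are exactly the pairs `{(j, false), (j, true)}`. -/
theorem stmt_11 (t : ℕ) (ht : 2 ≤ t)
    (A : Fin t × Bool → Fin t × Bool → Prop)
    (hAirr : ∀ u, ¬ A u u) (hAanti : ∀ u v, A u v → ¬ A v u)
    (hU : ∀ u v, (A u v ∨ A v u) ↔ (u.1 = v.1 ∧ u.2 ≠ v.2)) :
    ∀ (W : Type) [Fintype W] (Γ : SimpleGraph W),
      ∃ k : ℕ, chromCount Γ k ≠ foO A k :=
  stmt_11_general t ht A hAanti hU
end

section
/- Let G be a mixed graph on a finite vertex type V and let u, v be distinct vertices that are neither adjacent nor the ends of a 2-dipath. Let G+uv be the mixed graph obtained from G by adding an edge between u and v, and let G_{uv} be the mixed graph on V∖{v} in which, for distinct a, b ∈ V∖{v}: there is an arc a→b iff a→b in G, or a = u and v→b in G, or b = u and a→v in G; and there is an edge ab iff there is no arc between a and b in G_{uv} and (ab is an edge of G, or a = u and vb is an edge of G, or b = u and av is an edge of G). Then for every natural number k, f_o(G,k) = f_o(G+uv,k) + f_o(G_{uv},k). -/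
/-- Arc relation of the contraction `G_{uv}` (identify `v` into `u`, on vertex set `V \ {v}`). -/
def contractArc {V : Type*} (A : V → V → Prop) (u v : V)
    (a b : {x : V // x ≠ v}) : Prop :=
  A a.1 b.1 ∨ (a.1 = u ∧ A v b.1) ∨ (b.1 = u ∧ A a.1 v)

/-- Edge relation of the contraction `G_{uv}`: an edge remains only when the corresponding
pair does not carry an arc of `G_{uv}`. -/
def contractEdge {V : Type*} (A E : V → V → Prop) (u v : V)
    (a b : {x : V // x ≠ v}) : Prop :=
  ¬ (contractArc A u v a b ∨ contractArc A u v b a) ∧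
    (E a.1 b.1 ∨ (a.1 = u ∧ E v b.1) ∨ (b.1 = u ∧ E a.1 v))

/-!
Split the oriented colourings `c` of `G` according to whether `c u = c v`. Those with
`c u ≠ c v` are exactly the colourings of `G + uv`. The map `V → V ∖ {v}` sending `v` to `u`
carries the arcs of `G` onto the arcs of `G_{uv}` and its edges onto the arcs or edges of
`G_{uv}`, so colourings with `c u = c v` are exactly those that factor through it, i.e. the
pullbacks of the colourings of `G_{uv}`.
-/

theorem Nat.card_subtype_eq_card_and_not_add_card_and {α : Type*} [Finite α] (p q : α → Prop) :
    Nat.card {x // p x} = Nat.card {x // p x ∧ ¬ q x} + Nat.card {x // p x ∧ q x} := by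
  classical
  rw [← Nat.card_sum]
  exact Nat.card_congr <| (Equiv.sumCompl fun x : {x // p x} => ¬ q x).symm.trans <|
    Equiv.sumCongr (Equiv.subtypeSubtypeEquivSubtypeInter p (¬ q ·))
      ((Equiv.subtypeEquivRight fun _ => not_not).trans (Equiv.subtypeSubtypeEquivSubtypeInter p q))

section MixedColoring

variable {V W : Type*} {A E : V → V → Prop} {A' E' : W → W → Prop} {k : ℕ}

theorem mixedColoring_addEdge_iff {u v : V} {c : V → Fin k} :
    MixedColoring A (fun a b => E a b ∨ (a = u ∧ b = v) ∨ (a = v ∧ b = u)) c ↔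
      MixedColoring A E c ∧ c u ≠ c v := by
  constructor
  · rintro ⟨hadj, harc⟩
    exact ⟨⟨fun a b hab => hadj a b (by unfold MAdj at hab ⊢; tauto), harc⟩,
      hadj u v (Or.inr (Or.inr (Or.inr (Or.inl ⟨rfl, rfl⟩))))⟩
  · rintro ⟨⟨hadj, harc⟩, huv⟩
    refine ⟨fun a b hab => ?_, harc⟩
    rcases hab with h | h | h | ⟨rfl, rfl⟩ | ⟨rfl, rfl⟩
    · exact hadj a b (Or.inl h)
    · exact hadj a b (Or.inr (Or.inl h))
    · exact hadj a b (Or.inr (Or.inr h))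
    · exact huv
    · exact huv.symm

theorem MixedColoring.comp {f : V → W} {c : W → Fin k} (hc : MixedColoring A' E' c)
    (hA : ∀ a b, A a b → A' (f a) (f b)) (hE : ∀ a b, E a b → MAdj A' E' (f a) (f b)) :
    MixedColoring A E (c ∘ f) := by
  obtain ⟨hadj, harc⟩ := hc
  refine ⟨?_, fun a b x y hab hxy => harc _ _ _ _ (hA a b hab) (hA x y hxy)⟩
  rintro a b (h | h | h)
  · exact hadj _ _ (Or.inl (hA a b h))
  · exact hadj _ _ (Or.inr (Or.inl (hA b a h)))
  · exact hadj _ _ (hE a b h)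

theorem MixedColoring.of_comp {f : V → W} {c : W → Fin k}
    (hc : MixedColoring A E (c ∘ f))
    (hA : ∀ a b, A' a b → Relation.Map A f f a b)
    (hE : ∀ a b, E' a b → Relation.Map E f f a b) :
    MixedColoring A' E' c := by
  obtain ⟨hadj, harc⟩ := hc
  refine ⟨?_, ?_⟩
  · rintro _ _ (h | h | h)
    · obtain ⟨a, b, hab, rfl, rfl⟩ := hA _ _ h
      exact hadj a b (Or.inl hab)
    · obtain ⟨b, a, hba, rfl, rfl⟩ := hA _ _ h
      exact hadj a b (Or.inr (Or.inl hba))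
    · obtain ⟨a, b, hab, rfl, rfl⟩ := hE _ _ h
      exact hadj a b (Or.inr (Or.inr hab))
  · intro _ _ _ _ h₁ h₂
    obtain ⟨a, b, hab, rfl, rfl⟩ := hA _ _ h₁
    obtain ⟨x, y, hxy, rfl, rfl⟩ := hA _ _ h₂
    exact harc a b x y hab hxy

end MixedColoring

section Contraction

variable {V : Type*} {u v : V}

open Classical in
noncomputable def contractProj (huv : u ≠ v) (x : V) : {x : V // x ≠ v} :=
  if h : x = v then ⟨u, huv⟩ else ⟨x, h⟩

@[simp]
theorem contractProj_self (huv : u ≠ v) : contractProj huv v = ⟨u, huv⟩ :=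
  dif_pos rfl

theorem contractProj_of_ne (huv : u ≠ v) {x : V} (hx : x ≠ v) :
    contractProj huv x = ⟨x, hx⟩ :=
  dif_neg hx

@[simp]
theorem contractProj_val (huv : u ≠ v) (a : {x : V // x ≠ v}) : contractProj huv a.1 = a :=
  contractProj_of_ne huv a.2

theorem contractProj_left (huv : u ≠ v) : contractProj huv u = contractProj huv v := by
  rw [contractProj_self, contractProj_of_ne huv huv]

theorem comp_val_contractProj {α : Type*} (huv : u ≠ v) {c : V → α} (hc : c u = c v) :
    (fun a : {x // x ≠ v} => c a.1) ∘ contractProj huv = c := by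
  funext x
  by_cases hx : x = v
  · subst hx
    simp [hc]
  · simp [contractProj_of_ne huv hx]

theorem contractArc_eq_map (huv : u ≠ v) {R : V → V → Prop} (hR : ∀ x, ¬ R x x) :
    contractArc R u v = Relation.Map R (contractProj huv) (contractProj huv) := by
  ext a b
  constructor
  · rintro (h | ⟨ha, h⟩ | ⟨hb, h⟩)
    · exact ⟨a.1, b.1, h, contractProj_val huv a, contractProj_val huv b⟩
    · exact ⟨v, b.1, h, by rw [contractProj_self]; exact Subtype.ext ha.symm,
        contractProj_val huv b⟩
    · exact ⟨a.1, v, h, contractProj_val huv a,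
        by rw [contractProj_self]; exact Subtype.ext hb.symm⟩
  · rintro ⟨a, b, h, rfl, rfl⟩
    by_cases ha : a = v
    · subst ha
      have hb : b ≠ a := by rintro rfl; exact hR _ h
      exact Or.inr (Or.inl ⟨by simp, by simpa [contractProj_of_ne huv hb] using h⟩)
    · by_cases hb : b = v
      · subst hb
        exact Or.inr (Or.inr ⟨by simp, by simpa [contractProj_of_ne huv ha] using h⟩)
      · exact Or.inl (by simpa [contractProj_of_ne huv ha, contractProj_of_ne huv hb] using h)

variable {A E : V → V → Prop}

theorem mAdj_contractProj (huv : u ≠ v) (hEirr : ∀ x, ¬ E x x) {a b : V}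
    (h : E a b) :
    MAdj (contractArc A u v) (contractEdge A E u v) (contractProj huv a) (contractProj huv b) := by
  by_cases harc : contractArc A u v (contractProj huv a) (contractProj huv b) ∨
      contractArc A u v (contractProj huv b) (contractProj huv a)
  · exact harc.elim Or.inl (Or.inr ∘ Or.inl)
  · refine Or.inr (Or.inr ⟨harc, ?_⟩)
    show contractArc E u v _ _
    rw [contractArc_eq_map huv hEirr]
    exact ⟨a, b, h, rfl, rfl⟩

noncomputable def contractColoringEquiv (huv : u ≠ v) (hAirr : ∀ x, ¬ A x x)
    (hEirr : ∀ x, ¬ E x x) (k : ℕ) :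
    {c : V → Fin k // MixedColoring A E c ∧ c u = c v} ≃
      {c : {x : V // x ≠ v} → Fin k // MixedColoring (contractArc A u v) (contractEdge A E u v) c}
    where
  toFun c := ⟨fun a => c.1 a.1, by
    refine MixedColoring.of_comp (A := A) (E := E) (f := contractProj huv) ?_
      (fun a b h => ?_) (fun a b h => ?_)
    · rw [comp_val_contractProj huv c.2.2]
      exact c.2.1
    · rwa [← contractArc_eq_map huv hAirr]
    · rw [← contractArc_eq_map huv hEirr]
      exact h.2⟩
  invFun c := ⟨c.1 ∘ contractProj huv,
    c.2.comp (fun a b h => by rw [contractArc_eq_map huv hAirr]; exact ⟨a, b, h, rfl, rfl⟩)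
      (fun _ _ => mAdj_contractProj huv hEirr),
    congrArg c.1 (contractProj_left huv)⟩
  left_inv c := Subtype.ext (comp_val_contractProj huv c.2.2)
  right_inv c := Subtype.ext (funext fun a => congrArg c.1 (contractProj_val huv a))

end Contraction

theorem stmt_13_general {V : Type*} [Fintype V] (A E : V → V → Prop)
    (hAirr : ∀ u, ¬ A u u)
    (hEirr : ∀ u, ¬ E u u)
    (u v : V) (huv : u ≠ v) :
    ∀ k : ℕ,
      foM A E k =
        foM A (fun a b => E a b ∨ (a = u ∧ b = v) ∨ (a = v ∧ b = u)) k +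
          foM (contractArc A u v) (contractEdge A E u v) k := by
  intro k
  rw [foM, Nat.card_subtype_eq_card_and_not_add_card_and _ fun c : V → Fin k => c u = c v]
  congr 1
  · exact Nat.card_congr (Equiv.subtypeEquivRight fun _ => mixedColoring_addEdge_iff.symm)
  · exact Nat.card_congr (contractColoringEquiv huv hAirr hEirr k)

theorem stmt_13 {V : Type*} [Fintype V] (A E : V → V → Prop)
    (hAirr : ∀ u, ¬ A u u) (hAanti : ∀ u v, A u v → ¬ A v u)
    (hEirr : ∀ u, ¬ E u u) (hEsymm : ∀ u v, E u v → E v u)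
    (hAE : ∀ u v, (A u v ∨ A v u) → ¬ E u v)
    (u v : V) (huv : u ≠ v)
    (hnadj : ¬ MAdj A E u v) (hndip : ¬ DipathEnds A u v) :
    ∀ k : ℕ,
      foM A E k =
        foM A (fun a b => E a b ∨ (a = u ∧ b = v) ∨ (a = v ∧ b = u)) k +
          foM (contractArc A u v) (contractEdge A E u v) k :=
  stmt_13_general A E hAirr hEirr u v huv
end

section
/- For n ≥ 4, let D_n be the oriented graph on n vertices consisting of a directed path v_1→v_2→v_3→v_4 together with n-4 additional vertices x_1,…,x_{n-4}, each with a single arc x_j→v_4. Then for every natural number k, f_o(D_n, k) = k(k-1)(k-2)((k-2)^{n-4} + (k-3)(k-1)^{n-4}) (an identity of integers). -/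
/-- Arc relation of `D_n`: a directed path `v₁ → v₂ → v₃ → v₄` (vertices `0,1,2,3`)
together with `n - 4` leaves (vertices `4,…,n-1`), each with a single arc into `v₄`. -/
def dArc (n : ℕ) (a b : Fin n) : Prop :=
  (a.val = 0 ∧ b.val = 1) ∨ (a.val = 1 ∧ b.val = 2) ∨ (a.val = 2 ∧ b.val = 3) ∨
  (4 ≤ a.val ∧ b.val = 3)

/-! A colouring of `D_n` is a colouring `p` of the path `v₁v₂v₃v₄` together with colours of the
leaves, and the leaves interact only with `p`. On the path, the oriented condition forces the
colours of `v₁, v₂, v₃` to be distinct and that of `v₄` to differ from those of `v₂, v₃`. A leaf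
`x → v₄` must avoid the colour of `v₄` and, when `v₁` and `v₄` share a colour, also that of `v₂`
(the arcs `v₁ → v₂` and `x → v₄` would otherwise be reversed images of each other). So the
`k(k-1)(k-2)` path colourings with `p v₁ = p v₄` (injective triples) extend in `(k-2)^(n-4)` ways,
and the `k(k-1)(k-2)(k-3)` injective ones extend in `(k-1)^(n-4)` ways. -/

namespace DArc

open Fin

variable {m k : ℕ}

def IsPathColoring (p : Fin 4 → Fin k) : Prop :=
  p 0 ≠ p 1 ∧ p 0 ≠ p 2 ∧ p 1 ≠ p 2 ∧ p 1 ≠ p 3 ∧ p 2 ≠ p 3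

def IsLeafColor (p : Fin 4 → Fin k) (x : Fin k) : Prop :=
  x ≠ p 3 ∧ (p 0 = p 3 → x ≠ p 1)

theorem dArc_cases {u v : Fin (4 + m)} (h : dArc (4 + m) u v) :
    (u = castAdd m 0 ∧ v = castAdd m 1) ∨ (u = castAdd m 1 ∧ v = castAdd m 2) ∨
      (u = castAdd m 2 ∧ v = castAdd m 3) ∨ ∃ j, u = natAdd 4 j ∧ v = castAdd m 3 := by
  rcases h with ⟨hu, hv⟩ | ⟨hu, hv⟩ | ⟨hu, hv⟩ | ⟨hu, hv⟩
  · exact .inl ⟨Fin.ext hu, Fin.ext hv⟩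
  · exact .inr <| .inl ⟨Fin.ext hu, Fin.ext hv⟩
  · exact .inr <| .inr <| .inl ⟨Fin.ext hu, Fin.ext hv⟩
  · exact .inr <| .inr <| .inr ⟨⟨u - 4, by omega⟩, Fin.ext (by simp; omega), Fin.ext hv⟩

theorem oColoring_append_iff (p : Fin 4 → Fin k) (l : Fin m → Fin k) :
    OColoring (dArc (4 + m)) (append p l) ↔ IsPathColoring p ∧ ∀ j, IsLeafColor p (l j) := by
  constructor
  · rintro ⟨hne, hanti⟩
    have a01 : dArc (4 + m) (castAdd m 0) (castAdd m 1) := by simp [dArc]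
    have a12 : dArc (4 + m) (castAdd m 1) (castAdd m 2) := by simp [dArc]
    have a23 : dArc (4 + m) (castAdd m 2) (castAdd m 3) := by simp [dArc]
    have aLeaf (j : Fin m) : dArc (4 + m) (natAdd 4 j) (castAdd m 3) := by simp [dArc]
    refine ⟨⟨?_, ?_, ?_, ?_, ?_⟩, fun j => ⟨?_, fun h03 => ?_⟩⟩
    · simpa using hne _ _ a01
    · simpa [eq_comm] using hanti _ _ _ _ a12 a01
    · simpa using hne _ _ a12
    · simpa [eq_comm] using hanti _ _ _ _ a23 a12
    · simpa using hne _ _ a23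
    · simpa using hne _ _ (aLeaf j)
    · simpa [eq_comm, h03] using hanti _ _ _ _ a01 (aLeaf j)
  · rintro ⟨hp, hl⟩
    unfold IsPathColoring IsLeafColor at *
    refine ⟨fun u v h => ?_, fun u v x y h h' => ?_⟩
    · rcases dArc_cases h with ⟨rfl, rfl⟩ | ⟨rfl, rfl⟩ | ⟨rfl, rfl⟩ | ⟨j, rfl, rfl⟩ <;>
        simp [*, (hl _).1]
    · rcases dArc_cases h with ⟨rfl, rfl⟩ | ⟨rfl, rfl⟩ | ⟨rfl, rfl⟩ | ⟨j, rfl, rfl⟩ <;>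
      rcases dArc_cases h' with ⟨rfl, rfl⟩ | ⟨rfl, rfl⟩ | ⟨rfl, rfl⟩ | ⟨j', rfl, rfl⟩ <;>
        simp only [append_left, append_right] <;> grind

instance : DecidablePred (IsPathColoring (k := k)) := fun _ =>
  inferInstanceAs (Decidable (_ ∧ _))

instance (p : Fin 4 → Fin k) : DecidablePred (IsLeafColor p) := fun _ =>
  inferInstanceAs (Decidable (_ ∧ _))

theorem isPathColoring_and_ne_iff_injective (p : Fin 4 → Fin k) :
    IsPathColoring p ∧ p 0 ≠ p 3 ↔ Function.Injective p := by
  rw [← List.nodup_ofFn]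
  simp [IsPathColoring, List.ofFn_succ]
  tauto

def closedPathColoringEquiv :
    {p : Fin 4 → Fin k // IsPathColoring p ∧ p 0 = p 3} ≃ (Fin 3 ↪ Fin k) where
  toFun p := ⟨init p.1, by
    obtain ⟨⟨h01, h02, h12, -⟩, -⟩ := p.2
    rw [← List.nodup_ofFn]
    simp [List.ofFn_succ, init]
    tauto⟩
  invFun q := ⟨snoc q (q 0), by
    simp [IsPathColoring, snoc, Fin.ext_iff]⟩
  left_inv p := Subtype.ext <| by
    change snoc (init p.1) (p.1 0) = p.1
    rw [p.2.2]
    exact snoc_init_self p.1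
  right_inv q := by
    ext; simp

theorem card_closedPathColoring :
    Fintype.card {p : Fin 4 → Fin k // IsPathColoring p ∧ p 0 = p 3} = k.descFactorial 3 := by
  rw [Fintype.card_congr closedPathColoringEquiv, Fintype.card_embedding_eq, Fintype.card_fin,
    Fintype.card_fin]

theorem card_openPathColoring :
    Fintype.card {p : Fin 4 → Fin k // IsPathColoring p ∧ p 0 ≠ p 3} = k.descFactorial 4 := by
  rw [Fintype.card_congr ((Equiv.subtypeEquivRight isPathColoring_and_ne_iff_injective).trans
    (Equiv.subtypeInjectiveEquivEmbedding _ _)), Fintype.card_embedding_eq, Fintype.card_fin,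
    Fintype.card_fin]

theorem card_isLeafColor {p : Fin 4 → Fin k} (hp : IsPathColoring p) :
    (Fintype.card {x // IsLeafColor p x} : ℤ) =
      if p 0 = p 3 then (k : ℤ) - 2 else (k : ℤ) - 1 := by
  rw [Fintype.card_subtype]
  split_ifs with h
  · have : ({x | IsLeafColor p x} : Finset (Fin k)) = {p 3, p 1}ᶜ := by
      ext x; simp [IsLeafColor, h]
    rw [this, Finset.card_compl, Nat.cast_sub (Finset.card_le_univ _),
      Finset.card_pair hp.2.2.2.1.symm, Fintype.card_fin, Nat.cast_two]
  · have : ({x | IsLeafColor p x} : Finset (Fin k)) = {p 3}ᶜ := by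
      ext x; simp [IsLeafColor, h]
    rw [this, Finset.card_compl, Nat.cast_sub (Finset.card_le_univ _), Finset.card_singleton,
      Fintype.card_fin, Nat.cast_one]

theorem card_leafColorings (p : Fin 4 → Fin k) :
    Fintype.card {l : Fin m → Fin k // IsPathColoring p ∧ ∀ j, IsLeafColor p (l j)} =
      if IsPathColoring p then Fintype.card {x // IsLeafColor p x} ^ m else 0 := by
  split_ifs with hp
  · simp_rw [and_iff_right hp]
    rw [Fintype.card_congr Equiv.subtypePiEquivPi, Fintype.card_pi, Finset.prod_const,
      Finset.card_univ, Fintype.card_fin]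
  · rw [Fintype.card_eq_zero_iff]
    exact ⟨fun l => hp l.2.1⟩

theorem card_oColoring_dArc :
    foO (dArc (4 + m)) k =
      ∑ p : Fin 4 → Fin k,
        if IsPathColoring p then Fintype.card {x // IsLeafColor p x} ^ m else 0 := by
  have e := (Equiv.subtypeEquiv (Fin.appendEquiv 4 m)
    (fun pl => (oColoring_append_iff (k := k) pl.1 pl.2).symm)).symm.trans
    (Equiv.subtypeProdEquivSigmaSubtype fun (p : Fin 4 → Fin k) (l : Fin m → Fin k) =>
      IsPathColoring p ∧ ∀ j, IsLeafColor p (l j))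
  rw [foO, Nat.card_congr e, Nat.card_eq_fintype_card, Fintype.card_sigma]
  exact Finset.sum_congr rfl fun p _ => card_leafColorings p

theorem foO_dArc :
    (foO (dArc (4 + m)) k : ℤ) =
      k.descFactorial 3 * ((k : ℤ) - 2) ^ m + k.descFactorial 4 * ((k : ℤ) - 1) ^ m := by
  have summand_eq (p : Fin 4 → Fin k) :
      ((if IsPathColoring p then Fintype.card {x // IsLeafColor p x} ^ m else 0 : ℕ) : ℤ) =
        (if IsPathColoring p ∧ p 0 = p 3 then ((k : ℤ) - 2) ^ m else 0) +
          if IsPathColoring p ∧ p 0 ≠ p 3 then ((k : ℤ) - 1) ^ m else 0 := by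
    by_cases hp : IsPathColoring p <;> by_cases h : p 0 = p 3 <;>
      simp [hp, h, card_isLeafColor]
  rw [card_oColoring_dArc, Nat.cast_sum, Finset.sum_congr rfl fun p _ => summand_eq p,
    Finset.sum_add_distrib, Finset.sum_ite, Finset.sum_ite]
  simp only [Finset.sum_const_zero, add_zero, Finset.sum_const, nsmul_eq_mul,
    ← Fintype.card_subtype, card_closedPathColoring, card_openPathColoring]

end DArc

theorem stmt_14 (n : ℕ) (hn : 4 ≤ n) :
    ∀ k : ℕ,
      (foO (dArc n) k : ℤ) =
        (k : ℤ) * ((k : ℤ) - 1) * ((k : ℤ) - 2) *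
          (((k : ℤ) - 2) ^ (n - 4) + ((k : ℤ) - 3) * ((k : ℤ) - 1) ^ (n - 4)) := by
  intro k
  obtain ⟨m, rfl⟩ := Nat.exists_eq_add_of_le hn
  rw [Nat.add_sub_cancel_left, DArc.foO_dArc, ← descPochhammer_eval_eq_descFactorial,
    ← descPochhammer_eval_eq_descFactorial]
  simp only [descPochhammer_succ_eval, descPochhammer_zero, Polynomial.eval_one]
  push_cast
  ring
end

section
/- For every real number K > 0 there exist a natural number n ≥ 4 and a real number x with x < -K such that p_n(x) = 0, where p_n(x) = x(x-1)(x-2)((x-2)^{n-4} + (x-3)(x-1)^{n-4}). (Since p_n is the oriented chromatic polynomial of the oriented graph D_n, this shows that for every K > 0 there is an oriented graph whose oriented chromatic polynomial has a real root less than -K; moreover the root can be taken in the interval (-n, -ln n) with n even.) -/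
/-- The oriented chromatic polynomial of the oriented graph `D_n` (a directed path on four
vertices `v₁ → v₂ → v₃ → v₄` together with `n - 4` leaves, each with an arc into `v₄`). -/
noncomputable def pD (n : ℕ) (x : ℝ) : ℝ :=
  x * (x - 1) * (x - 2) * ((x - 2) ^ (n - 4) + (x - 3) * (x - 1) ^ (n - 4))

/-!
For even `m = n - 4` and `x = -y`, the last factor of `pD n` is `(y + 2) ^ m - (y + 3) (y + 1) ^ m`,
whose sign is that of `(1 + 1 / (y + 1)) ^ m - (y + 3)`. At `y = n` the power is at most `e < 3`,
while at `y = k` with `(k + 1) (k + 2) < m` Bernoulli's inequality makes it exceed `k + 3`; so the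
intermediate value theorem gives a root in `(-n, -k)`. Taking `n ≈ 2 k²` and `k` large, `log n < k`.
-/

open Set

def leafFactor (m : ℕ) (x : ℝ) : ℝ :=
  (x - 2) ^ m + (x - 3) * (x - 1) ^ m

lemma pD_eq_mul_leafFactor (n : ℕ) (x : ℝ) :
    pD n x = x * (x - 1) * (x - 2) * leafFactor (n - 4) x :=
  rfl

lemma leafFactor_neg {m : ℕ} (hm : Even m) (y : ℝ) :
    leafFactor m (-y) = (y + 2) ^ m - (y + 3) * (y + 1) ^ m := by
  rw [leafFactor, show -y - 2 = -(y + 2) by ring, show -y - 1 = -(y + 1) by ring,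
    hm.neg_pow, hm.neg_pow]
  ring

lemma add_two_pow_lt_add_three_mul_add_one_pow {a m : ℕ} (hm : m ≤ a + 1) :
    ((a : ℝ) + 2) ^ m < (a + 3) * (a + 1) ^ m := by
  have hpos : (0 : ℝ) < (a + 1) ^ m := by positivity
  have hratio : (1 + ((a + 1 : ℕ) : ℝ)⁻¹) ^ m ≤ Real.exp 1 :=
    (pow_le_pow_right₀ (by simp; positivity) hm).trans Real.one_add_inv_pow_le_exp
  have hsplit : ((a : ℝ) + 2) ^ m = (a + 1) ^ m * (1 + ((a + 1 : ℕ) : ℝ)⁻¹) ^ m := by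
    rw [← mul_pow]
    congr 1
    push_cast
    field_simp
    ring
  calc ((a : ℝ) + 2) ^ m = (a + 1) ^ m * (1 + ((a + 1 : ℕ) : ℝ)⁻¹) ^ m := hsplit
    _ ≤ (a + 1) ^ m * Real.exp 1 := by gcongr
    _ < (a + 1) ^ m * 3 := by gcongr; exact Real.exp_one_lt_three
    _ ≤ (a + 3) * (a + 1) ^ m := by nlinarith [(a.cast_nonneg : (0 : ℝ) ≤ a)]

lemma add_three_mul_add_one_pow_lt_add_two_pow {y : ℝ} (hy : 0 ≤ y) {m : ℕ}
    (hm : (y + 1) * (y + 2) < m) :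
    (y + 3) * (y + 1) ^ m < (y + 2) ^ m := by
  have hy1 : 0 < y + 1 := by linarith
  have hbernoulli : 1 + m * (y + 1)⁻¹ ≤ (1 + (y + 1)⁻¹) ^ m :=
    one_add_mul_le_pow (by have := inv_pos.2 hy1; linarith) m
  have hlt : y + 3 < 1 + m * (y + 1)⁻¹ := by
    have : y + 2 < m / (y + 1) := by rw [lt_div_iff₀ hy1]; linarith
    rw [← div_eq_mul_inv]
    linarith
  have hsplit : (y + 2) ^ m = (y + 1) ^ m * (1 + (y + 1)⁻¹) ^ m := by
    rw [← mul_pow]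
    congr 1
    field_simp
    ring
  calc (y + 3) * (y + 1) ^ m < (1 + m * (y + 1)⁻¹) * (y + 1) ^ m := by gcongr
    _ ≤ (1 + (y + 1)⁻¹) ^ m * (y + 1) ^ m := by gcongr
    _ = (y + 2) ^ m := by rw [hsplit, mul_comm]

lemma exists_pD_eq_zero_mem_Ioo {n k : ℕ} (hn : Even n) (hkn : (k + 1) * (k + 2) + 4 < n) :
    ∃ x ∈ Ioo (-(n : ℝ)) (-k), pD n x = 0 := by
  have hm : Even (n - 4) := by
    obtain ⟨j, rfl⟩ := hn
    exact ⟨j - 2, by omega⟩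
  have hleft : leafFactor (n - 4) (-n) < 0 := by
    rw [leafFactor_neg hm, sub_neg]
    exact add_two_pow_lt_add_three_mul_add_one_pow (by omega)
  have hright : 0 < leafFactor (n - 4) (-k) := by
    rw [leafFactor_neg hm, sub_pos]
    refine add_three_mul_add_one_pow_lt_add_two_pow k.cast_nonneg ?_
    exact_mod_cast (by omega : (k + 1) * (k + 2) < n - 4)
  have hcont : Continuous (leafFactor (n - 4)) := by
    unfold leafFactor
    fun_prop
  have hkn' : k ≤ n := by nlinarith
  obtain ⟨x, hx, hx0⟩ := intermediate_value_Ioo (by simpa using hkn') hcont.continuousOn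
    ⟨hleft, hright⟩
  exact ⟨x, hx, by rw [pD_eq_mul_leafFactor, hx0, mul_zero]⟩

lemma log_two_mul_add_one_mul_add_two_add_four_lt {k : ℕ} (hk : 10 ≤ k) :
    Real.log (2 * (k + 1) * (k + 2) + 4 : ℕ) < k := by
  have hk' : (10 : ℝ) ≤ k := by exact_mod_cast hk
  have hexp : (k : ℝ) ^ 4 / 24 ≤ Real.exp k := by
    simpa [Nat.factorial] using Real.pow_div_factorial_le_exp (k : ℝ) k.cast_nonneg 4
  rw [Real.log_lt_iff_lt_exp (by positivity)]
  push_cast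
  nlinarith [mul_le_mul hk' hk' (by norm_num) k.cast_nonneg]

theorem stmt_15 :
    ∀ K : ℝ, 0 < K → ∃ n : ℕ, 4 ≤ n ∧ Even n ∧
      ∃ x : ℝ, x < -K ∧ -(n : ℝ) < x ∧ x < -Real.log n ∧ pD n x = 0 := by
  intro K _
  set k := ⌈K⌉₊ + 10
  have hn : Even (2 * (k + 1) * (k + 2) + 4) := ⟨(k + 1) * (k + 2) + 2, by ring⟩
  obtain ⟨x, ⟨hnx, hxk⟩, hx⟩ := exists_pD_eq_zero_mem_Ioo hn (k := k) (by nlinarith)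
  have hKk : K < k := by
    have := Nat.le_ceil K
    push_cast [k]
    linarith
  refine ⟨_, by omega, hn, x, by linarith, hnx, ?_, hx⟩
  linarith [log_two_mul_add_one_mul_add_two_add_four_lt (k := k) (by omega)]
end
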